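/- arXiv:2405.09362 — 7 statements merged into one kernel-verified Lean document; each statement's English description precedes it below -/
import Mathlib

section
/- Let β ∈ (0,1), p ≥ 1, and let (λ_i)_{i≥1} be a sequence of positive reals satisfying c₁ i^{-1/β} ≤ λ_i ≤ c₂ i^{-1/β} for all i ≥ 1, where 0 < c₁ ≤ c₂ are constants. Define the p-effective dimension N_p(λ) := Σ_{i=1}^∞ (λ_i/(λ_i + λ))^p. Then there exist constants 0 < c ≤ C, depending only on p, β, c₁, c₂, such that c·λ^{-β} ≤ N_p(λ) ≤ C·λ^{-β} for every λ ∈ (0,1]. -/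
/-!
With `r_i = λ_i / (λ_i + λ) ∈ (0, 1]`, the two sides come from counting how many `λ_i` exceed `λ`.
Upper bound: `r_i^p ≤ min 1 (λ_i / λ) ≤ min 1 (a (i+1)^{-1/β})` with `a = c₂/λ`; the first
`⌈a^β⌉` terms are at most `1` each, and by the integral test the tail is at most
`a · (a^β)^{1-1/β} / (1/β - 1) = a^β β / (1 - β)`. Lower bound: the first `⌊(c₁/λ)^β⌋` eigenvalues
are `≥ λ`, so they contribute `r_i ≥ 1/2` each, while `r_0 ≥ min 1 c₁ / 2` for `λ ≤ 1` covers the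
case where there are none.
-/

open Real Finset

lemma sum_range_rpow_neg_le {x s : ℝ} (hx : 0 < x) (hs : 1 < s) (n : ℕ) :
    ∑ i ∈ range n, (x + (i + 1 : ℕ)) ^ (-s) ≤ x ^ (1 - s) / (s - 1) := by
  have hanti : AntitoneOn (fun t : ℝ => t ^ (-s)) (Set.Icc x (x + n)) := fun a ha b _ hab =>
    rpow_le_rpow_of_nonpos (hx.trans_le ha.1) hab (by linarith)
  have hx0 : (0 : ℝ) ∉ Set.uIcc x (x + n) := by
    rw [Set.uIcc_of_le (le_add_of_nonneg_right n.cast_nonneg)]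
    exact fun h => h.1.not_gt hx
  calc ∑ i ∈ range n, (x + (i + 1 : ℕ)) ^ (-s)
      ≤ ∫ t in x..x + n, t ^ (-s) := hanti.sum_le_integral
    _ = (x ^ (1 - s) - (x + n) ^ (1 - s)) / (s - 1) := by
        rw [integral_rpow (Or.inr ⟨by linarith, hx0⟩), neg_add_eq_sub, ← neg_sub s 1,
          div_neg, ← neg_div, neg_sub]
    _ ≤ x ^ (1 - s) / (s - 1) :=
        div_le_div_of_nonneg_right (sub_le_self _ (by positivity)) (by linarith)

lemma nat_mul_le_tsum {f : ℕ → ℝ} (hf0 : ∀ i, 0 ≤ f i) (hf : Summable f) {K : ℕ} {b : ℝ}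
    (hb : ∀ i < K, b ≤ f i) : K * b ≤ ∑' i, f i :=
  calc (K : ℝ) * b = ∑ _i ∈ range K, b := by simp
    _ ≤ ∑ i ∈ range K, f i := sum_le_sum fun i hi => hb i (mem_range.1 hi)
    _ ≤ ∑' i, f i := hf.sum_le_tsum _ fun i _ => hf0 i

lemma half_le_max_one_floor (y : ℝ) : y / 2 ≤ (max 1 ⌊y⌋₊ : ℕ) := by
  rw [Nat.cast_max, Nat.cast_one]
  rcases lt_or_ge y 2 with hy | hy
  · exact le_max_of_le_left (by linarith)
  · exact le_max_of_le_right (by linarith [Nat.lt_floor_add_one y])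

lemma min_one_div_le_div_add {x t : ℝ} (hx : 0 ≤ x) (ht : 0 < t) :
    min 1 (x / t) / 2 ≤ x / (x + t) := by
  rw [div_le_div_iff₀ two_pos (by linarith)]
  rcases le_total x t with hxt | htx
  · calc min 1 (x / t) * (x + t) ≤ x / t * (t + t) := by gcongr; exact min_le_right _ _
      _ = x * 2 := by field_simp; ring
  · calc min 1 (x / t) * (x + t) ≤ 1 * (x + x) := by gcongr; exact min_le_left _ _
      _ = x * 2 := by ring

lemma summable_and_tsum_le_of_le_min {f : ℕ → ℝ} {a β : ℝ} (hβ : β ∈ Set.Ioo 0 1) (ha : 0 < a)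
    (hf0 : ∀ i, 0 ≤ f i) (hf1 : ∀ i, f i ≤ 1) (hfa : ∀ i, f i ≤ a * ((i : ℝ) + 1) ^ (-(1 / β))) :
    Summable f ∧ ∑' i, f i ≤ a ^ β / (1 - β) + 1 := by
  obtain ⟨hβ0, hβ1⟩ := hβ
  have hs : 1 < 1 / β := (one_lt_div hβ0).2 hβ1
  set N := ⌈a ^ β⌉₊
  have haβ : 0 < a ^ β := rpow_pos_of_pos ha β
  have hN : 0 < (N : ℝ) := by simpa [N] using haβ
  set g : ℕ → ℝ := fun i => a * ((N : ℝ) + (i + 1 : ℕ)) ^ (-(1 / β))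
  have hg0 : ∀ i, 0 ≤ g i := fun i => by positivity
  have hg : ∀ n, ∑ i ∈ range n, g i ≤ a * ((N : ℝ) ^ (1 - 1 / β) / (1 / β - 1)) := fun n => by
    rw [← mul_sum]
    exact mul_le_mul_of_nonneg_left (sum_range_rpow_neg_le hN hs n) ha.le
  have hfg : ∀ i, f (i + N) ≤ g i := fun i => by
    convert hfa (i + N) using 3
    push_cast
    ring
  have hf : Summable f :=
    (summable_nat_add_iff N).1 ((summable_of_sum_range_le hg0 hg).of_nonneg_of_le
      (fun i => hf0 _) hfg)
  refine ⟨hf, ?_⟩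
  have hhead : ∑ i ∈ range N, f i ≤ a ^ β + 1 :=
    calc ∑ i ∈ range N, f i ≤ N := by simpa using sum_le_sum fun i (_ : i ∈ range N) => hf1 i
      _ ≤ a ^ β + 1 := (Nat.ceil_lt_add_one haβ.le).le
  have htail : ∑' i, f (i + N) ≤ a ^ β * (β / (1 - β)) :=
    calc ∑' i, f (i + N) ≤ ∑' i, g i :=
          ((summable_nat_add_iff N).2 hf).tsum_le_tsum hfg (summable_of_sum_range_le hg0 hg)
      _ ≤ a * ((N : ℝ) ^ (1 - 1 / β) / (1 / β - 1)) := Real.tsum_le_of_sum_range_le hg0 hg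
      _ ≤ a * ((a ^ β) ^ (1 - 1 / β) / (1 / β - 1)) := by
          gcongr ?_ * (?_ / _)
          exact rpow_le_rpow_of_nonpos haβ (Nat.le_ceil _) (by linarith)
      _ = a ^ β * (β / (1 - β)) := by
          rw [← rpow_mul ha.le, show β * (1 - 1 / β) = β - 1 by field_simp, rpow_sub_one ha.ne']
          field_simp
  rw [← hf.sum_add_tsum_nat_add N]
  have : a ^ β / (1 - β) = a ^ β + a ^ β * (β / (1 - β)) := by
    field_simp [(sub_pos.2 hβ1).ne']
    ring
  linarith

noncomputable def effectiveDim (p : ℝ) (lam : ℕ → ℝ) (t : ℝ) : ℝ :=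
  ∑' i, (lam i / (lam i + t)) ^ p

section EffectiveDim

variable {β p t : ℝ} {lam : ℕ → ℝ}

theorem summable_and_effectiveDim_le {c₂ : ℝ} (hβ : β ∈ Set.Ioo 0 1) (hp : 1 ≤ p) (hc₂ : 0 < c₂)
    (hlam : ∀ i, 0 < lam i) (hdecay : ∀ i : ℕ, lam i ≤ c₂ * ((i : ℝ) + 1) ^ (-(1 / β)))
    (ht : 0 < t) :
    Summable (fun i => (lam i / (lam i + t)) ^ p) ∧
      effectiveDim p lam t ≤ (c₂ / t) ^ β / (1 - β) + 1 := by
  have hr0 : ∀ i, 0 < lam i / (lam i + t) := fun i => by have := hlam i; positivity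
  have hr1 : ∀ i, lam i / (lam i + t) ≤ 1 := fun i =>
    (div_le_one (by linarith [hlam i])).2 (by linarith)
  refine summable_and_tsum_le_of_le_min hβ (div_pos hc₂ ht)
    (fun i => (rpow_pos_of_pos (hr0 i) p).le)
    (fun i => rpow_le_one (hr0 i).le (hr1 i) (by linarith)) (fun i => ?_)
  calc (lam i / (lam i + t)) ^ p ≤ lam i / (lam i + t) := by
          simpa using rpow_le_rpow_of_exponent_ge (hr0 i) (hr1 i) hp
    _ ≤ lam i / t := div_le_div_of_nonneg_left (hlam i).le ht (by linarith [hlam i])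
    _ ≤ c₂ * ((i : ℝ) + 1) ^ (-(1 / β)) / t := by gcongr; exact hdecay i
    _ = c₂ / t * ((i : ℝ) + 1) ^ (-(1 / β)) := by ring

theorem le_effectiveDim {c₁ : ℝ} (hβ : 0 < β) (hp : 0 ≤ p) (hc₁ : 0 < c₁)
    (hdecay : ∀ i : ℕ, c₁ * ((i : ℝ) + 1) ^ (-(1 / β)) ≤ lam i) (ht : 0 < t)
    (hsum : Summable (fun i => (lam i / (lam i + t)) ^ p)) :
    (min 1 (c₁ / t) / 2) ^ p * ((c₁ / t) ^ β / 2) ≤ effectiveDim p lam t := by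
  set y := (c₁ / t) ^ β
  have hlam : ∀ i, 0 < lam i := fun i => lt_of_lt_of_le (by positivity) (hdecay i)
  have hterm : ∀ i : ℕ, i < max 1 ⌊y⌋₊ → min 1 (c₁ / t) / 2 ≤ lam i / (lam i + t) := by
    intro i hi
    refine le_trans (div_le_div_of_nonneg_right ?_ zero_le_two)
      (min_one_div_le_div_add (hlam i).le ht)
    rcases Nat.eq_zero_or_pos i with rfl | hi0
    · exact min_le_min_left _ (div_le_div_of_nonneg_right (by simpa using hdecay 0) ht.le)
    · have hiy : (i : ℝ) + 1 ≤ y := by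
        have : i + 1 ≤ ⌊y⌋₊ := by omega
        exact_mod_cast Nat.le_floor_iff' (by omega) |>.1 this
      have hti : t ≤ lam i :=
        calc t = c₁ * y ^ (-(1 / β)) := by
              rw [← rpow_mul (by positivity), mul_neg, mul_one_div_cancel hβ.ne', rpow_neg_one,
                inv_div]
              field_simp
          _ ≤ c₁ * ((i : ℝ) + 1) ^ (-(1 / β)) :=
              mul_le_mul_of_nonneg_left
                (rpow_le_rpow_of_nonpos (by positivity) hiy (by rw [neg_nonpos]; positivity)) hc₁.le
          _ ≤ lam i := hdecay i
      rw [min_eq_left ((one_le_div ht).2 hti)]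
      exact min_le_left _ _
  calc (min 1 (c₁ / t) / 2) ^ p * (y / 2)
      ≤ (min 1 (c₁ / t) / 2) ^ p * (max 1 ⌊y⌋₊ : ℕ) := by
        gcongr; exact half_le_max_one_floor y
    _ ≤ effectiveDim p lam t := by
        rw [mul_comm]
        refine nat_mul_le_tsum (fun i => rpow_nonneg ?_ p) hsum fun i hi =>
          rpow_le_rpow (by positivity) (hterm i hi) hp
        exact div_nonneg (hlam i).le (by linarith [hlam i])

end EffectiveDim

theorem stmt0_general (β p c₁ c₂ : ℝ) (hβ : β ∈ Set.Ioo (0:ℝ) 1) (hp : 1 ≤ p)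
    (hc₁ : 0 < c₁)
    (lam : ℕ → ℝ)
    (hdecay : ∀ i : ℕ, c₁ * ((i + 1 : ℝ)) ^ (-(1 / β)) ≤ lam i ∧
      lam i ≤ c₂ * ((i + 1 : ℝ)) ^ (-(1 / β))) :
    ∃ c C : ℝ, 0 < c ∧ c ≤ C ∧
      ∀ lambda : ℝ, lambda ∈ Set.Ioc (0:ℝ) 1 →
        c * lambda ^ (-β) ≤ ∑' i : ℕ, (lam i / (lam i + lambda)) ^ p ∧
        (∑' i : ℕ, (lam i / (lam i + lambda)) ^ p) ≤ C * lambda ^ (-β) := by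
  have hlam : ∀ i, 0 < lam i := fun i => lt_of_lt_of_le (by positivity) (hdecay i).1
  have hc₂ : 0 < c₂ := by simpa using (hlam 0).trans_le (hdecay 0).2
  have hscale : ∀ {c t : ℝ}, 0 ≤ c → 0 < t → (c / t) ^ β = c ^ β * t ^ (-β) := fun hc ht => by
    rw [div_rpow hc ht.le, rpow_neg ht.le, div_eq_mul_inv]
  have hbounds : ∀ t ∈ Set.Ioc (0 : ℝ) 1,
      (min 1 c₁ / 2) ^ p * (c₁ ^ β / 2) * t ^ (-β) ≤ effectiveDim p lam t ∧
      effectiveDim p lam t ≤ (c₂ ^ β / (1 - β) + 1) * t ^ (-β) := by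
    rintro t ⟨ht0, ht1⟩
    obtain ⟨hsum, hupper⟩ :=
      summable_and_effectiveDim_le hβ hp hc₂ hlam (fun i => (hdecay i).2) ht0
    have hlower := le_effectiveDim hβ.1 (by linarith) hc₁ (fun i => (hdecay i).1) ht0 hsum
    have hmin : min 1 c₁ ≤ min 1 (c₁ / t) := min_le_min_left _ (le_div_self hc₁.le ht0 ht1)
    have htβ : 1 ≤ t ^ (-β) := one_le_rpow_of_pos_of_le_one_of_nonpos ht0 ht1 (by linarith [hβ.1])
    rw [hscale hc₁.le ht0] at hlower
    rw [hscale hc₂.le ht0] at hupper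
    constructor
    · refine le_trans ?_ hlower
      rw [mul_div_right_comm, ← mul_assoc]
      gcongr
    · refine hupper.trans ?_
      rw [add_mul, one_mul, div_mul_eq_mul_div]
      linarith
  refine ⟨_, _, by positivity, ?_, hbounds⟩
  simpa using (hbounds 1 ⟨one_pos, le_rfl⟩).1.trans (hbounds 1 ⟨one_pos, le_rfl⟩).2

/-- two-sided estimate `N_p(λ) ≍ λ^{-β}` of the `p`-effective dimension
`N_p(λ) = ∑_{i≥1} (λ_i/(λ_i+λ))^p` under the eigenvalue decay condition
`c₁ i^{-1/β} ≤ λ_i ≤ c₂ i^{-1/β}`. -/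
theorem stmt0 (β p c₁ c₂ : ℝ) (hβ : β ∈ Set.Ioo (0:ℝ) 1) (hp : 1 ≤ p)
    (hc₁ : 0 < c₁) (hc₁c₂ : c₁ ≤ c₂)
    (lam : ℕ → ℝ) (hlampos : ∀ i, 0 < lam i)
    (hdecay : ∀ i : ℕ, c₁ * ((i + 1 : ℝ)) ^ (-(1 / β)) ≤ lam i ∧
      lam i ≤ c₂ * ((i + 1 : ℝ)) ^ (-(1 / β))) :
    ∃ c C : ℝ, 0 < c ∧ c ≤ C ∧
      ∀ lambda : ℝ, lambda ∈ Set.Ioc (0:ℝ) 1 →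
        c * lambda ^ (-β) ≤ ∑' i : ℕ, (lam i / (lam i + lambda)) ^ p ∧
        (∑' i : ℕ, (lam i / (lam i + lambda)) ^ p) ≤ C * lambda ^ (-β) :=
  stmt0_general β p c₁ c₂ hβ hp hc₁ lam hdecay
end

section
/- Let ξ_1, …, ξ_n be i.i.d. real random variables with |ξ_i| ≤ B almost surely, E[ξ_i] = μ, and E[(ξ_i − μ)²] ≤ σ². Then for every α > 0 and every ε > 0, P{ (1/n)·Σ_{i=1}^n ξ_i − μ ≥ α σ² + ε } ≤ exp( − 6nαε/(3 + 4αB) ). -/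
/-!
For `|y| ≤ d < 3` the tail of the exponential series is dominated by a geometric series, so
`exp y ≤ 1 + y + y² / (2 (1 - d/3))`. Hence a centred variable bounded by `2B` with variance at
most `σ²` has `E exp (t Y) ≤ exp (t² σ² / (2 (1 - 2Bt/3)))`. At `t = 6α / (3 + 4αB)` this exponent
is exactly `α t σ²`, so the Chernoff bound for the independent sum of the centred `ξ_i` at level
`n (α σ² + ε)` leaves `exp (-n t ε)`.
-/

open MeasureTheory ProbabilityTheory Real Nat

lemma Real.exp_le_one_add_add_sq_div_of_abs_le {y d : ℝ} (hy : |y| ≤ d) (hd : d < 3) :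
    exp y ≤ 1 + y + y ^ 2 / (2 * (1 - d / 3)) := by
  have hd0 : 0 ≤ d := (abs_nonneg y).trans hy
  have hq : d / 3 < 1 := by linarith
  have hterm (k : ℕ) : y ^ (k + 2) / (k + 2)! ≤ y ^ 2 / 2 * (d / 3) ^ k := by
    have hpow : y ^ (k + 2) ≤ y ^ 2 * d ^ k :=
      calc y ^ (k + 2) ≤ |y| ^ (k + 2) := by rw [← abs_pow]; exact le_abs_self _
      _ = y ^ 2 * |y| ^ k := by rw [pow_add, sq_abs, mul_comm]
      _ ≤ y ^ 2 * d ^ k := by gcongr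
    have hfact : (2 * 3 ^ k : ℝ) ≤ (k + 2)! := by
      rw [add_comm k]; exact_mod_cast factorial_mul_pow_le_factorial (m := 2) (n := k)
    calc y ^ (k + 2) / (k + 2)! ≤ y ^ 2 * d ^ k / (2 * 3 ^ k) :=
          div_le_div₀ (by positivity) hpow (by positivity) hfact
    _ = y ^ 2 / 2 * (d / 3) ^ k := by rw [div_pow]; ring
  have htail := (hasSum_nat_add_iff' 2).mpr (NormedSpace.expSeries_div_hasSum_exp y)
  have hgeo := (hasSum_geometric_of_lt_one (by positivity) hq).mul_left (y ^ 2 / 2)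
  have := hasSum_le hterm htail hgeo
  rw [← div_eq_mul_inv, div_div, sub_le_iff_le_add, ← exp_eq_exp_ℝ] at this
  simpa [Finset.sum_range_succ, add_comm] using this

namespace ProbabilityTheory

variable {Ω : Type*} [MeasurableSpace Ω] {P : Measure Ω} [IsProbabilityMeasure P]

lemma ae_abs_sub_integral_le {X : Ω → ℝ} {B : ℝ} (hB : ∀ᵐ ω ∂P, |X ω| ≤ B) :
    ∀ᵐ ω ∂P, |X ω - ∫ ω', X ω' ∂P| ≤ 2 * B := by
  have hmean : |∫ ω, X ω ∂P| ≤ B := by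
    simpa using norm_integral_le_of_norm_le_const (μ := P) (f := X)
      (by simpa only [norm_eq_abs] using hB)
  filter_upwards [hB] with ω hω
  calc |X ω - ∫ ω', X ω' ∂P| ≤ |X ω| + |∫ ω', X ω' ∂P| := abs_sub _ _
  _ ≤ 2 * B := by linarith

lemma measure_sum_ge_le_of_iIndepFun_of_mgf_le {ι : Type*} [Fintype ι] {X : ι → Ω → ℝ}
    (h_indep : iIndepFun X P) (h_meas : ∀ i, Measurable (X i)) {t c : ℝ} (ht : 0 ≤ t)
    (h_int : ∀ i, Integrable (fun ω => exp (t * X i ω)) P) (h_mgf : ∀ i, mgf (X i) P t ≤ exp c)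
    (ε : ℝ) :
    P.real {ω | ε ≤ ∑ i, X i ω} ≤ exp (-t * ε + Fintype.card ι * c) := by
  have h_sum_int : Integrable (fun ω => exp (t * (∑ i, X i) ω)) P :=
    h_indep.integrable_exp_mul_sum h_meas fun i _ => h_int i
  calc P.real {ω | ε ≤ ∑ i, X i ω} ≤ exp (-t * ε) * mgf (∑ i, X i) P t := by
        simpa only [Finset.sum_apply] using measure_ge_le_exp_mul_mgf ε ht h_sum_int
  _ = exp (-t * ε) * ∏ i, mgf (X i) P t := by rw [h_indep.mgf_sum h_meas]
  _ ≤ exp (-t * ε) * ∏ _i : ι, exp c := by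
        gcongr with i
        exacts [fun i _ => mgf_nonneg, h_mgf i]
  _ = exp (-t * ε + Fintype.card ι * c) := by
        rw [Finset.prod_const, ← exp_nat_mul, ← exp_add, Finset.card_univ]

lemma mgf_le_of_abs_le_of_integral_eq_zero {X : Ω → ℝ} (hX : AEMeasurable X P) {c v t : ℝ}
    (hc : ∀ᵐ ω ∂P, |X ω| ≤ c) (hmean : ∫ ω, X ω ∂P = 0) (hvar : ∫ ω, X ω ^ 2 ∂P ≤ v)
    (ht : 0 ≤ t) (htc : t * c < 3) :
    mgf X P t ≤ exp (t ^ 2 * v / (2 * (1 - t * c / 3))) := by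
  set a := t ^ 2 / (2 * (1 - t * c / 3)) with ha_def
  have ha : 0 ≤ a := div_nonneg (sq_nonneg t) (by linarith)
  have hX_int : Integrable X P :=
    .of_bound hX.aestronglyMeasurable c (by simpa only [norm_eq_abs] using hc)
  have hX2_int : Integrable (fun ω => X ω ^ 2) P :=
    .of_bound (hX.pow_const 2).aestronglyMeasurable (c ^ 2) <| by
      filter_upwards [hc] with ω hω
      rw [norm_pow, norm_eq_abs]
      gcongr
  have hpointwise : ∀ᵐ ω ∂P, exp (t * X ω) ≤ 1 + t * X ω + a * X ω ^ 2 := by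
    filter_upwards [hc] with ω hω
    have htX : |t * X ω| ≤ t * c := by rw [abs_mul, abs_of_nonneg ht]; gcongr
    calc exp (t * X ω) ≤ 1 + t * X ω + (t * X ω) ^ 2 / (2 * (1 - t * c / 3)) :=
          exp_le_one_add_add_sq_div_of_abs_le htX htc
    _ = 1 + t * X ω + a * X ω ^ 2 := by ring
  have hlin_int : Integrable (fun ω => 1 + t * X ω) P :=
    (integrable_const 1).add (hX_int.const_mul t)
  have hexp_int : Integrable (fun ω => exp (t * X ω)) P :=
    integrable_exp_mul_of_le t c ht hX (hc.mono fun _ h => (le_abs_self _).trans h)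
  calc mgf X P t ≤ ∫ ω, 1 + t * X ω + a * X ω ^ 2 ∂P :=
        integral_mono_ae hexp_int (hlin_int.add (hX2_int.const_mul a)) hpointwise
  _ = 1 + t * ∫ ω, X ω ∂P + a * ∫ ω, X ω ^ 2 ∂P := by
        rw [integral_add hlin_int (hX2_int.const_mul a),
          integral_add (integrable_const 1) (hX_int.const_mul t), integral_const_mul,
          integral_const_mul]
        simp
  _ ≤ 1 + t ^ 2 * v / (2 * (1 - t * c / 3)) := by
        rw [hmean, mul_zero, add_zero, mul_div_right_comm, ← ha_def]
        gcongr
  _ ≤ exp (t ^ 2 * v / (2 * (1 - t * c / 3))) := by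
        linarith [add_one_le_exp (t ^ 2 * v / (2 * (1 - t * c / 3)))]

lemma mgf_sub_integral_le_of_abs_le {X : Ω → ℝ} (hX : AEMeasurable X P) {B v t : ℝ}
    (hB : ∀ᵐ ω ∂P, |X ω| ≤ B) (hvar : ∫ ω, (X ω - ∫ ω', X ω' ∂P) ^ 2 ∂P ≤ v) (ht : 0 ≤ t)
    (htB : t * (2 * B) < 3) :
    mgf (fun ω => X ω - ∫ ω', X ω' ∂P) P t ≤ exp (t ^ 2 * v / (2 * (1 - t * (2 * B) / 3))) := by
  refine mgf_le_of_abs_le_of_integral_eq_zero (hX.sub_const _) (ae_abs_sub_integral_le hB) ?_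
    hvar ht htB
  simpa only [average_eq_integral] using integral_sub_average P X

end ProbabilityTheory

theorem stmt3_general {Ω : Type*} [MeasurableSpace Ω] (P : Measure Ω) [IsProbabilityMeasure P]
    (n : ℕ) (hn : 0 < n) (ξ : Fin n → Ω → ℝ)
    (hmeas : ∀ i, Measurable (ξ i))
    (hindep : iIndepFun ξ P)
    (B mu sigma : ℝ) (hB : 0 < B)
    (hbound : ∀ i, ∀ᵐ ω ∂P, |ξ i ω| ≤ B)
    (hmean : ∀ i, ∫ ω, ξ i ω ∂P = mu)
    (hvar : ∀ i, ∫ ω, (ξ i ω - mu) ^ 2 ∂P ≤ sigma ^ 2)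
    (α ε : ℝ) (hα : 0 < α) :
    P {ω | α * sigma ^ 2 + ε ≤ (1 / n : ℝ) * ∑ i, ξ i ω - mu} ≤
      ENNReal.ofReal (Real.exp (-(6 * n * α * ε) / (3 + 4 * α * B))) := by
  -- the solution of `t / (2 * (1 - t * (2 * B) / 3)) = α`
  set t := 6 * α / (3 + 4 * α * B) with ht_def
  have ht : 0 ≤ t := by positivity
  have htB : t * (2 * B) < 3 := by
    rw [ht_def, div_mul_eq_mul_div, div_lt_iff₀ (by positivity)]
    nlinarith [mul_pos hα hB]
  have ht_root : t ^ 2 * sigma ^ 2 / (2 * (1 - t * (2 * B) / 3)) = t * (α * sigma ^ 2) := by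
    rw [ht_def]; field_simp; ring
  set Y : Fin n → Ω → ℝ := fun i ω => ξ i ω - mu
  have hY_meas (i : Fin n) : Measurable (Y i) := (hmeas i).sub_const mu
  have hY_mgf (i : Fin n) : mgf (Y i) P t ≤ exp (t * (α * sigma ^ 2)) := by
    have := mgf_sub_integral_le_of_abs_le (v := sigma ^ 2) (hmeas i).aemeasurable (hbound i)
      (by rw [hmean i]; exact hvar i) ht htB
    rwa [hmean i, ht_root] at this
  have hY_int (i : Fin n) : Integrable (fun ω => exp (t * Y i ω)) P :=
    integrable_exp_mul_of_le t (B - mu) ht (hY_meas i).aemeasurable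
      ((hbound i).mono fun _ h => sub_le_sub_right (le_of_abs_le h) mu)
  have hevent : {ω | α * sigma ^ 2 + ε ≤ (1 / n : ℝ) * ∑ i, ξ i ω - mu}
      ⊆ {ω | n * (α * sigma ^ 2 + ε) ≤ ∑ i, Y i ω} := by
    intro ω hω
    have hn' : (0 : ℝ) < n := by exact_mod_cast hn
    simp only [Set.mem_ofPred_eq, Y, Finset.sum_sub_distrib, Finset.sum_const, Finset.card_univ,
      Fintype.card_fin, nsmul_eq_mul] at hω ⊢
    rw [le_sub_iff_add_le, one_div, inv_mul_eq_div, le_div_iff₀ hn'] at hω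
    linarith
  rw [ENNReal.le_ofReal_iff_toReal_le (measure_ne_top _ _) (exp_nonneg _)]
  calc P.real _ ≤ P.real {ω | n * (α * sigma ^ 2 + ε) ≤ ∑ i, Y i ω} := measureReal_mono hevent
  _ ≤ exp (-t * (n * (α * sigma ^ 2 + ε)) + Fintype.card (Fin n) * (t * (α * sigma ^ 2))) :=
        measure_sum_ge_le_of_iIndepFun_of_mgf_le (hindep.comp (fun _ x => x - mu)
          fun _ => measurable_id.sub_const mu) hY_meas ht hY_int hY_mgf _
  _ = exp (-(6 * n * α * ε) / (3 + 4 * α * B)) := by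
        rw [Fintype.card_fin, ht_def]; ring_nf

/-- one-sided exponential tail bound: for i.i.d. bounded real random variables
`ξ_1,…,ξ_n` with `|ξ_i| ≤ B` a.s., mean `μ` and variance at most `σ²`, for all `α, ε > 0`,
`P{(1/n)∑ ξ_i - μ ≥ ασ² + ε} ≤ exp(-6nαε/(3+4αB))`. -/
theorem stmt3 {Ω : Type*} [MeasurableSpace Ω] (P : Measure Ω) [IsProbabilityMeasure P]
    (n : ℕ) (hn : 0 < n) (ξ : Fin n → Ω → ℝ)
    (hmeas : ∀ i, Measurable (ξ i))
    (hindep : iIndepFun ξ P)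
    (hident : ∀ i j, P.map (ξ i) = P.map (ξ j))
    (B mu sigma : ℝ) (hB : 0 < B)
    (hbound : ∀ i, ∀ᵐ ω ∂P, |ξ i ω| ≤ B)
    (hmean : ∀ i, ∫ ω, ξ i ω ∂P = mu)
    (hvar : ∀ i, ∫ ω, (ξ i ω - mu) ^ 2 ∂P ≤ sigma ^ 2)
    (α ε : ℝ) (hα : 0 < α) (hε : 0 < ε) :
    P {ω | α * sigma ^ 2 + ε ≤ (1 / n : ℝ) * ∑ i, ξ i ω - mu} ≤
      ENNReal.ofReal (Real.exp (-(6 * n * α * ε) / (3 + 4 * α * B))) :=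
  stmt3_general P n hn ξ hmeas hindep B mu sigma hB hbound hmean hvar α ε hα
end

section
/- Let (X, 𝒜, μ) be a probability space, let f : X → ℝ be measurable with |f(x)| ≤ M for all x, and let x_1, …, x_n be i.i.d. samples from μ. Write ‖f‖_{L²}² = ∫_X f² dμ and ‖f‖_{L²,n}² = (1/n)·Σ_{i=1}^n f(x_i)². Then for every α > 0 and δ ∈ (0,1), with probability at least 1 − δ, |‖f‖_{L²,n}² − ‖f‖_{L²}²| ≤ α M² ‖f‖_{L²}² + ((3 + 4αM²)/(6αn))·ln(2/δ). In particular, taking α = 1/(2M²), with probability at least 1 − δ one has (1/2)‖f‖_{L²}² − (5M²/(3n))·ln(2/δ) ≤ ‖f‖_{L²,n}² ≤ (3/2)‖f‖_{L²}² + (5M²/(3n))·ln(2/δ). -/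
/-!
The variables `f(xᵢ)² - ‖f‖²_{L²}` are independent, centred and bounded by `M²` in absolute
value; since `0 ≤ f² ≤ M²`, their variance is at most `E[f⁴] ≤ M²‖f‖²_{L²}`. Bernstein's
inequality therefore bounds the deviation of the empirical mean, with probability `1 - δ`, by
`√(2M²‖f‖²_{L²} L / n) + 2M²L / (3n)` where `L = log (2/δ)`, and the AM-GM inequality splits the
square root into `αM²‖f‖²_{L²} + L / (2αn)`. Bernstein's inequality itself is the Chernoff bound
at `s = t / (V + bt/3)`, fed by `exp x ≤ 1 + x + x² / (2(1 - u/3))` for `x ≤ u < 3`.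
-/

open MeasureTheory ProbabilityTheory Real
open scoped Nat

namespace Real

lemma exp_le_one_add_add_sq_div_two_of_nonpos {x : ℝ} (hx : x ≤ 0) :
    exp x ≤ 1 + x + x ^ 2 / 2 := by
  have hanti : Antitone fun y : ℝ => 1 + y + y ^ 2 / 2 - exp y := by
    refine antitone_of_deriv_nonpos (by fun_prop) fun y => ?_
    have hderiv : HasDerivAt (fun y : ℝ => 1 + y + y ^ 2 / 2 - exp y) (1 + y - exp y) y :=
      ((((hasDerivAt_id' y).const_add 1).add ((hasDerivAt_pow 2 y).div_const 2)).sub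
        (hasDerivAt_exp y)).congr_deriv (by norm_num)
    rw [hderiv.deriv]
    linarith [add_one_le_exp y]
  simpa using hanti hx

lemma pow_add_two_div_factorial_le {x : ℝ} (hx : 0 ≤ x) (k : ℕ) :
    x ^ (k + 2) / (k + 2)! ≤ x ^ 2 / 2 * (x / 3) ^ k := by
  have hfact : (2 * 3 ^ k : ℝ) ≤ (k + 2)! := by
    exact_mod_cast add_comm 2 k ▸ Nat.factorial_mul_pow_le_factorial (m := 2) (n := k)
  calc x ^ (k + 2) / (k + 2)! ≤ x ^ (k + 2) / (2 * 3 ^ k) := by gcongr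
    _ = x ^ 2 / 2 * (x / 3) ^ k := by rw [div_pow]; ring

lemma exp_le_one_add_add_sq_div_of_le {u x : ℝ} (hu : 0 ≤ u) (hu3 : u < 3) (hx : x ≤ u) :
    exp x ≤ 1 + x + x ^ 2 / (2 * (1 - u / 3)) := by
  have hu3' : 0 < 1 - u / 3 := by linarith
  rcases le_or_gt x 0 with hx0 | hx0
  · calc exp x ≤ 1 + x + x ^ 2 / 2 := exp_le_one_add_add_sq_div_two_of_nonpos hx0
      _ ≤ 1 + x + x ^ 2 / (2 * (1 - u / 3)) := by gcongr; linarith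
  have hr : x / 3 < 1 := by linarith
  have hexp : HasSum (fun k => x ^ (k + 2) / (k + 2)!) (exp x - (1 + x)) := by
    have := (hasSum_nat_add_iff' 2).2 (NormedSpace.expSeries_div_hasSum_exp x)
    simpa [Finset.sum_range_succ, ← exp_eq_exp_ℝ] using this
  have htail : exp x - (1 + x) ≤ x ^ 2 / 2 * (1 - x / 3)⁻¹ :=
    hasSum_le (pow_add_two_div_factorial_le hx0.le) hexp
      ((hasSum_geometric_of_lt_one (by positivity) hr).mul_left _)
  calc exp x ≤ 1 + x + x ^ 2 / 2 * (1 - x / 3)⁻¹ := by linarith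
    _ ≤ 1 + x + x ^ 2 / (2 * (1 - u / 3)) := by
      rw [div_mul_eq_div_div, div_eq_mul_inv _ (1 - u / 3)]
      gcongr

lemma two_mul_exp_neg_sq_div_le_of_sqrt_add_le {v b t δ : ℝ} (hv : 0 ≤ v) (hb : 0 ≤ b)
    (hδ0 : 0 < δ) (hδ2 : δ ≤ 2) (hD : 0 < v + b * t / 3)
    (ht : √(2 * v * log (2 / δ)) + 2 * b * log (2 / δ) / 3 ≤ t) :
    2 * exp (-t ^ 2 / (2 * (v + b * t / 3))) ≤ δ := by
  set L := log (2 / δ)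
  have hL : 0 ≤ L := log_nonneg (by rw [le_div_iff₀ hδ0]; linarith)
  have hsq : √(2 * v * L) ^ 2 = 2 * v * L := sq_sqrt (by positivity)
  have hsqrt_le : √(2 * v * L) ≤ t := le_trans (le_add_of_nonneg_right (by positivity)) ht
  have hquad : 2 * L * (v + b * t / 3) ≤ t ^ 2 := by nlinarith [sqrt_nonneg (2 * v * L)]
  have hexponent : -t ^ 2 / (2 * (v + b * t / 3)) ≤ -L := by
    rw [neg_div, neg_le_neg_iff, le_div_iff₀ (by positivity)]
    linarith
  calc 2 * exp (-t ^ 2 / (2 * (v + b * t / 3))) ≤ 2 * exp (-L) := by gcongr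
    _ = δ := by
      rw [exp_neg, exp_log (by positivity)]
      field_simp

end Real

namespace ProbabilityTheory

variable {Ω : Type*} {mΩ : MeasurableSpace Ω} {μ : Measure Ω}

lemma ofReal_one_sub_le_of_measureReal_compl_le [IsProbabilityMeasure μ] {s : Set Ω} {δ : ℝ}
    (h : μ.real sᶜ ≤ δ) : ENNReal.ofReal (1 - δ) ≤ μ s := by
  have hcover : 1 ≤ μ.real s + μ.real sᶜ := by
    simpa [Set.union_compl_self] using measureReal_union_le (μ := μ) s sᶜ
  rw [← ofReal_measureReal]
  exact ENNReal.ofReal_le_ofReal (by linarith)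

lemma variance_le_mul_integral_of_nonneg_of_le [IsProbabilityMeasure μ] {g : Ω → ℝ} {B : ℝ}
    (hg : AEStronglyMeasurable g μ) (hg0 : ∀ ω, 0 ≤ g ω) (hgB : ∀ ω, g ω ≤ B) :
    Var[g; μ] ≤ B * μ[g] := by
  have hgL : MemLp g 2 μ :=
    .of_bound hg B (ae_of_all _ fun ω => by rw [norm_of_nonneg (hg0 ω)]; exact hgB ω)
  calc Var[g; μ] ≤ μ[g ^ 2] := variance_le_expectation_sq hg
    _ ≤ ∫ ω, B * g ω ∂μ :=
      integral_mono (f := g ^ 2) hgL.integrable_sq ((hgL.integrable one_le_two).const_mul B)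
        fun ω => by simpa [sq] using mul_le_mul_of_nonneg_right (hgB ω) (hg0 ω)
    _ = B * μ[g] := integral_const_mul B g

lemma mgf_le_exp_of_le_of_integral_eq_zero [IsProbabilityMeasure μ] {X : Ω → ℝ} {b v t : ℝ}
    (hX : MemLp X 2 μ) (hXb : ∀ ω, X ω ≤ b) (hmean : μ[X] = 0) (hvar : Var[X; μ] ≤ v)
    (hb : 0 ≤ b) (ht : 0 ≤ t) (htb : t * b < 3) :
    mgf X μ t ≤ exp (t ^ 2 * v / (2 * (1 - t * b / 3))) := by
  set c := t ^ 2 / (2 * (1 - t * b / 3)) with hc_def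
  have hc : 0 ≤ c := by
    have : 0 < 1 - t * b / 3 := by linarith
    positivity
  have hpt : ∀ ω, exp (t * X ω) ≤ 1 + t * X ω + c * X ω ^ 2 := fun ω => by
    have := exp_le_one_add_add_sq_div_of_le (mul_nonneg ht hb) htb
      (mul_le_mul_of_nonneg_left (hXb ω) ht)
    convert this using 2
    ring
  have hsecond : ∫ ω, X ω ^ 2 ∂μ ≤ v := by
    rwa [← variance_of_integral_eq_zero hX.aestronglyMeasurable.aemeasurable hmean]
  have hint : Integrable (fun ω => 1 + t * X ω) μ :=
    (integrable_const 1).add ((hX.integrable one_le_two).const_mul t)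
  calc mgf X μ t ≤ ∫ ω, 1 + t * X ω + c * X ω ^ 2 ∂μ :=
        integral_mono (integrable_exp_mul_of_le t b ht hX.aestronglyMeasurable.aemeasurable
          (ae_of_all _ hXb)) (hint.add (hX.integrable_sq.const_mul c)) hpt
    _ = 1 + c * ∫ ω, X ω ^ 2 ∂μ := by
      rw [integral_add hint (hX.integrable_sq.const_mul c),
        integral_add (integrable_const 1) ((hX.integrable one_le_two).const_mul t),
        integral_const_mul, integral_const_mul, hmean]
      simp
    _ ≤ 1 + c * v := by gcongr
    _ ≤ exp (c * v) := by linarith [add_one_le_exp (c * v)]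
    _ = exp (t ^ 2 * v / (2 * (1 - t * b / 3))) := by rw [hc_def]; ring_nf

variable {ι : Type*} {X : ι → Ω → ℝ} {s : Finset ι} {b V t : ℝ}

lemma measureReal_sum_ge_le_bernstein_of_pos (h_indep : iIndepFun X μ)
    (h_meas : ∀ i, Measurable (X i)) (hX : ∀ i ∈ s, MemLp (X i) 2 μ)
    (hXb : ∀ i ∈ s, ∀ ω, X i ω ≤ b) (hmean : ∀ i ∈ s, μ[X i] = 0)
    (hvar : ∑ i ∈ s, Var[X i; μ] ≤ V) (hb : 0 ≤ b) (hV : 0 < V) (ht : 0 ≤ t) :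
    μ.real {ω | t ≤ ∑ i ∈ s, X i ω} ≤ exp (-t ^ 2 / (2 * (V + b * t / 3))) := by
  have := h_indep.isProbabilityMeasure
  set D := V + b * t / 3 with hD_def
  have hD : 0 < D := by positivity
  set r := t / D with hr_def
  have hr : 0 ≤ r := by positivity
  have hrb : 1 - r * b / 3 = V / D := by
    rw [hr_def]
    field_simp
    rw [hD_def]
    ring
  have hrb3 : r * b < 3 := by
    have : 0 < V / D := by positivity
    linarith
  have hmgf : mgf (∑ i ∈ s, X i) μ r ≤ exp (r ^ 2 * V / (2 * (1 - r * b / 3))) := by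
    rw [h_indep.mgf_sum h_meas]
    calc ∏ i ∈ s, mgf (X i) μ r
        ≤ ∏ i ∈ s, exp (r ^ 2 * Var[X i; μ] / (2 * (1 - r * b / 3))) :=
          Finset.prod_le_prod (fun _ _ => mgf_nonneg) fun i hi =>
            mgf_le_exp_of_le_of_integral_eq_zero (hX i hi) (hXb i hi) (hmean i hi) le_rfl hb hr
              hrb3
      _ = exp (r ^ 2 * (∑ i ∈ s, Var[X i; μ]) / (2 * (1 - r * b / 3))) := by
          rw [← exp_sum, Finset.mul_sum, Finset.sum_div]
      _ ≤ exp (r ^ 2 * V / (2 * (1 - r * b / 3))) := by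
          have : 0 < 1 - r * b / 3 := by linarith
          gcongr
  have hint : Integrable (fun ω => exp (r * (∑ i ∈ s, X i) ω)) μ :=
    h_indep.integrable_exp_mul_sum h_meas fun i hi =>
      integrable_exp_mul_of_le r b hr (h_meas i).aemeasurable (ae_of_all _ (hXb i hi))
  calc μ.real {ω | t ≤ ∑ i ∈ s, X i ω} ≤ exp (-r * t) * mgf (∑ i ∈ s, X i) μ r := by
        simpa only [Finset.sum_apply] using measure_ge_le_exp_mul_mgf t hr hint
    _ ≤ exp (-r * t) * exp (r ^ 2 * V / (2 * (1 - r * b / 3))) := by gcongr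
    _ = exp (-t ^ 2 / (2 * D)) := by
        rw [← exp_add, hrb, hr_def]
        congr 1
        field_simp
        ring

/- The Chernoff parameter `t / (V + bt/3)` is admissible only for `V > 0`; the case `V = 0`
follows by continuity in `V`. -/
lemma measureReal_sum_ge_le_bernstein (h_indep : iIndepFun X μ)
    (h_meas : ∀ i, Measurable (X i)) (hX : ∀ i ∈ s, MemLp (X i) 2 μ)
    (hXb : ∀ i ∈ s, ∀ ω, X i ω ≤ b) (hmean : ∀ i ∈ s, μ[X i] = 0)
    (hvar : ∑ i ∈ s, Var[X i; μ] ≤ V) (hb : 0 < b) (ht : 0 < t) :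
    μ.real {ω | t ≤ ∑ i ∈ s, X i ω} ≤ exp (-t ^ 2 / (2 * (V + b * t / 3))) := by
  have hV : 0 ≤ V := (Finset.sum_nonneg fun i _ => variance_nonneg _ _).trans hvar
  have hcont : ContinuousAt (fun V' => exp (-t ^ 2 / (2 * (V' + b * t / 3)))) V := by
    have : 2 * (V + b * t / 3) ≠ 0 := by positivity
    fun_prop (disch := assumption)
  refine ge_of_tendsto (hcont.tendsto.mono_left (nhdsWithin_le_nhds (s := Set.Ioi V))) ?_
  filter_upwards [self_mem_nhdsWithin] with V' (hV' : V < V')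
  exact measureReal_sum_ge_le_bernstein_of_pos h_indep h_meas hX hXb hmean
    (hvar.trans hV'.le) hb.le (hV.trans_lt hV') ht.le

lemma measureReal_abs_sum_ge_le_bernstein (h_indep : iIndepFun X μ)
    (h_meas : ∀ i, Measurable (X i)) (hXb : ∀ i ∈ s, ∀ ω, |X i ω| ≤ b)
    (hmean : ∀ i ∈ s, μ[X i] = 0) (hvar : ∑ i ∈ s, Var[X i; μ] ≤ V) (hb : 0 < b) (ht : 0 < t) :
    μ.real {ω | t ≤ |∑ i ∈ s, X i ω|} ≤ 2 * exp (-t ^ 2 / (2 * (V + b * t / 3))) := by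
  have := h_indep.isProbabilityMeasure
  have hX : ∀ i ∈ s, MemLp (X i) 2 μ := fun i hi =>
    .of_bound (h_meas i).aestronglyMeasurable b (ae_of_all _ (hXb i hi))
  have h_upper := measureReal_sum_ge_le_bernstein h_indep h_meas hX
    (fun i hi ω => (le_abs_self _).trans (hXb i hi ω)) hmean hvar hb ht
  have h_lower := measureReal_sum_ge_le_bernstein (X := fun i ω => -X i ω)
    (h_indep.comp (fun _ x => -x) fun _ => measurable_neg) (fun i => (h_meas i).neg)
    (fun i hi => (hX i hi).neg) (fun i hi ω => (neg_le_abs _).trans (hXb i hi ω))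
    (fun i hi => by rw [integral_neg, hmean i hi, neg_zero])
    (by simpa only [variance_fun_neg] using hvar) hb ht
  calc μ.real {ω | t ≤ |∑ i ∈ s, X i ω|}
      ≤ μ.real ({ω | t ≤ ∑ i ∈ s, X i ω} ∪ {ω | t ≤ ∑ i ∈ s, -X i ω}) := by
        refine measureReal_mono fun ω (hω : t ≤ |_|) => ?_
        simpa only [Set.mem_union, Set.mem_ofPred_eq, Finset.sum_neg_distrib] using le_abs.1 hω
    _ ≤ _ := (measureReal_union_le _ _).trans (by linarith)

end ProbabilityTheory

section EmpiricalMean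

variable {X : Type*} [MeasurableSpace X] {μ : Measure X} [IsProbabilityMeasure μ] {g : X → ℝ}
  {B : ℝ} {n : ℕ} {δ : ℝ}

lemma le_measure_abs_empirical_mean_sub_integral_le (hg : Measurable g) (hB : 0 < B)
    (hg0 : ∀ x, 0 ≤ g x) (hgB : ∀ x, g x ≤ B) (hn : 0 < n) (hδ : δ ∈ Set.Ioo 0 1) {T : ℝ}
    (hT : √(2 * (n * (B * μ[g])) * log (2 / δ)) + 2 * B * log (2 / δ) / 3 ≤ n * T) :
    ENNReal.ofReal (1 - δ) ≤
      Measure.pi (fun _ : Fin n => μ) {x | |(1 / n : ℝ) * ∑ i, g (x i) - μ[g]| ≤ T} := by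
  obtain ⟨hδ0, hδ1⟩ := hδ
  set E := μ[g]
  set L := log (2 / δ)
  set ν := Measure.pi fun _ : Fin n => μ
  set G := {x : Fin n → X | |(1 / n : ℝ) * ∑ i, g (x i) - E| ≤ T}
  have hn' : (0 : ℝ) < n := by exact_mod_cast hn
  have hL : 0 < L := log_pos (by rw [lt_div_iff₀ hδ0]; linarith)
  have hg_int : Integrable g μ :=
    .of_mem_Icc 0 B hg.aemeasurable (ae_of_all _ fun x => ⟨hg0 x, hgB x⟩)
  have hE0 : 0 ≤ E := integral_nonneg hg0
  have hEB : E ≤ B := by simpa using integral_mono hg_int (integrable_const B) hgB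
  have hmean : ∀ i, ∫ x, g (x i) - E ∂ν = 0 := fun i => by
    rw [integral_comp_eval (μ := fun _ => μ) (f := fun y => g y - E)
      (hg.sub_const E).aestronglyMeasurable, integral_sub hg_int (integrable_const E)]
    simp [E]
  have hvar : ∀ i, Var[fun x => g (x i) - E; ν] ≤ B * E := fun i => by
    rw [(measurePreserving_eval (fun _ => μ) i).variance_fun_comp (f := fun y => g y - E)
      (hg.sub_const E).aemeasurable, variance_sub_const hg.aestronglyMeasurable]
    exact variance_le_mul_integral_of_nonneg_of_le hg.aestronglyMeasurable hg0 hgB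
  have ht : 0 < n * T := lt_of_lt_of_le (by positivity) ((le_add_of_nonneg_left
    (sqrt_nonneg _)).trans hT)
  have htail := measureReal_abs_sum_ge_le_bernstein (s := Finset.univ) (V := n * (B * E))
    (iIndepFun_pi fun _ => (hg.sub_const E).aemeasurable)
    (fun i => (hg.comp (measurable_pi_apply i)).sub_const E)
    (fun i _ x => abs_sub_le_of_nonneg_of_le (hg0 _) (hgB _) hE0 hEB) (fun i _ => hmean i)
    (by simpa using Finset.sum_le_sum fun i (_ : i ∈ Finset.univ) => hvar i) hB ht
  have hsub : Gᶜ ⊆ {x | n * T ≤ |∑ i, (g (x i) - E)|} := fun x hx => by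
    have hlt : T < |(1 / n : ℝ) * ∑ i, g (x i) - E| := not_le.1 hx
    have hsum : ∑ i, (g (x i) - E) = n * ((1 / n : ℝ) * ∑ i, g (x i) - E) := by
      rw [Finset.sum_sub_distrib]
      field_simp
      simp
    rw [Set.mem_ofPred_eq, hsum, abs_mul, abs_of_pos hn']
    exact (mul_lt_mul_of_pos_left hlt hn').le
  refine ofReal_one_sub_le_of_measureReal_compl_le ((measureReal_mono hsub).trans
    (htail.trans ?_))
  exact two_mul_exp_neg_sq_div_le_of_sqrt_add_le (by positivity) hB.le hδ0 (by linarith)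
    (by positivity) hT

lemma le_measure_abs_empirical_mean_sub_integral_le_mul_add (hg : Measurable g) (hB : 0 < B)
    (hg0 : ∀ x, 0 ≤ g x) (hgB : ∀ x, g x ≤ B) (hn : 0 < n) (hδ : δ ∈ Set.Ioo 0 1) {α : ℝ}
    (hα : 0 < α) :
    ENNReal.ofReal (1 - δ) ≤
      Measure.pi (fun _ : Fin n => μ) {x | |(1 / n : ℝ) * ∑ i, g (x i) - μ[g]| ≤
        α * B * μ[g] + (3 + 4 * α * B) / (6 * α * n) * log (2 / δ)} := by
  refine le_measure_abs_empirical_mean_sub_integral_le hg hB hg0 hgB hn hδ ?_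
  set E := μ[g]
  set L := log (2 / δ)
  have hE0 : 0 ≤ E := integral_nonneg hg0
  have hL : 0 < L := log_pos (by rw [lt_div_iff₀ hδ.1]; linarith [hδ.2])
  have hamgm : √(2 * (n * (B * E)) * L) ≤ n * (α * B * E) + L / (2 * α) := by
    refine sqrt_le_iff.2 ⟨by positivity, ?_⟩
    have hprod : 2 * (n * (B * E)) * L = 4 * (n * (α * B * E)) * (L / (2 * α)) := by
      field_simp
      ring
    nlinarith [sq_nonneg (n * (α * B * E) - L / (2 * α))]
  have hsplit : n * (α * B * E + (3 + 4 * α * B) / (6 * α * n) * L) =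
      n * (α * B * E) + L / (2 * α) + 2 * B * L / 3 := by
    field_simp
    ring
  linarith

end EmpiricalMean

/-- empirical vs population squared `L²`-norm. For a measurable `f` with
`|f| ≤ M` and i.i.d. samples `x_1,…,x_n ∼ μ` (modeled by the product measure on `Fin n → X`),
with probability at least `1-δ`:
`|‖f‖²_{L²,n} - ‖f‖²_{L²}| ≤ αM²‖f‖²_{L²} + ((3+4αM²)/(6αn)) log(2/δ)`, and in particular
(taking `α = 1/(2M²)`) the two-sided bound
`(1/2)‖f‖²_{L²} - (5M²/(3n))log(2/δ) ≤ ‖f‖²_{L²,n} ≤ (3/2)‖f‖²_{L²} + (5M²/(3n))log(2/δ)`. -/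
theorem stmt4 {X : Type*} [MeasurableSpace X] (μ : Measure X) [IsProbabilityMeasure μ]
    (f : X → ℝ) (hf : Measurable f) (M : ℝ) (hM : 0 < M)
    (hbound : ∀ x, |f x| ≤ M)
    (n : ℕ) (hn : 0 < n) (δ : ℝ) (hδ : δ ∈ Set.Ioo (0:ℝ) 1) :
    (∀ α : ℝ, 0 < α →
      ENNReal.ofReal (1 - δ) ≤
        Measure.pi (fun _ : Fin n => μ)
          {x | |(1 / n : ℝ) * ∑ i, (f (x i)) ^ 2 - ∫ t, (f t) ^ 2 ∂μ| ≤
            α * M ^ 2 * (∫ t, (f t) ^ 2 ∂μ) +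
              (3 + 4 * α * M ^ 2) / (6 * α * n) * Real.log (2 / δ)}) ∧
    ENNReal.ofReal (1 - δ) ≤
      Measure.pi (fun _ : Fin n => μ)
        {x | (1 / 2 : ℝ) * (∫ t, (f t) ^ 2 ∂μ) - 5 * M ^ 2 / (3 * n) * Real.log (2 / δ) ≤
            (1 / n : ℝ) * ∑ i, (f (x i)) ^ 2 ∧
          (1 / n : ℝ) * ∑ i, (f (x i)) ^ 2 ≤
            (3 / 2 : ℝ) * (∫ t, (f t) ^ 2 ∂μ) + 5 * M ^ 2 / (3 * n) * Real.log (2 / δ)} := by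
  have hf2 : ∀ x, f x ^ 2 ≤ M ^ 2 := fun x => sq_le_sq.2 ((hbound x).trans (le_abs_self M))
  have hM2 : 0 < M ^ 2 := by positivity
  have hbernstein := fun α (hα : 0 < α) =>
    le_measure_abs_empirical_mean_sub_integral_le_mul_add (μ := μ) (hf.pow_const 2) hM2
      (fun x => sq_nonneg _) hf2 hn hδ hα
  refine ⟨hbernstein, (hbernstein (1 / (2 * M ^ 2)) (by positivity)).trans
    (measure_mono fun x hx => ?_)⟩
  have hhalf : 1 / (2 * M ^ 2) * M ^ 2 = 1 / 2 := by field_simp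
  have hconst : (3 + 4 * (1 / (2 * M ^ 2)) * M ^ 2) / (6 * (1 / (2 * M ^ 2)) * n) =
      5 * M ^ 2 / (3 * n) := by
    field_simp
    ring
  rw [Set.mem_ofPred_eq, hhalf, hconst] at hx
  constructor <;> linarith [abs_le.1 hx]
end

section
/- Let H be a real inner product space, X ⊆ ℝ^d, and Φ : X → H a map, and set k(x,y) := ⟨Φ(x), Φ(y)⟩_H. Suppose there exist α ∈ (0,1] and L > 0 such that |k(x₁,x₂) − k(y₁,y₂)| ≤ L·‖(x₁,x₂) − (y₁,y₂)‖^α for all x₁,x₂,y₁,y₂ ∈ X (Euclidean norm on ℝ^{2d}). Then every f ∈ H induces a Hölder-continuous function: for all x, y ∈ X, |⟨Φ(x), f⟩ − ⟨Φ(y), f⟩| ≤ √(2L)·‖f‖_H·‖x − y‖^{α/2}. -/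
open scoped RealInnerProductSpace

/-! The kernel controls the feature map through
`‖Φ x - Φ y‖² = (k(x,x) - k(y,x)) - (k(x,y) - k(y,y))`: each bracket moves only the first
argument of `k`, so Hölder continuity of `k` gives `‖Φ x - Φ y‖² ≤ 2L‖x - y‖^α`, and
Cauchy–Schwarz transfers the resulting bound on `‖Φ x - Φ y‖` to `⟪Φ ·, f⟫`. -/

section FeatureMap

variable {H : Type*} [NormedAddCommGroup H] [InnerProductSpace ℝ H]

theorem norm_sub_sq_eq_inner_sub_inner (u v : H) :
    ‖u - v‖ ^ 2 = (⟪u, u⟫ - ⟪v, u⟫) - (⟪u, v⟫ - ⟪v, v⟫) := by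
  rw [norm_sub_sq_real, real_inner_self_eq_norm_sq, real_inner_self_eq_norm_sq,
    real_inner_comm v u]
  ring

theorem norm_sub_le_sqrt_of_abs_inner_sub_le {u v : H} {C : ℝ}
    (hu : |⟪u, u⟫ - ⟪v, u⟫| ≤ C) (hv : |⟪u, v⟫ - ⟪v, v⟫| ≤ C) :
    ‖u - v‖ ≤ √(2 * C) := by
  have hsq : ‖u - v‖ ^ 2 ≤ 2 * C := by
    rw [norm_sub_sq_eq_inner_sub_inner]
    linarith [le_abs_self (⟪u, u⟫ - ⟪v, u⟫), neg_abs_le (⟪u, v⟫ - ⟪v, v⟫)]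
  exact Real.le_sqrt_of_sq_le hsq

theorem abs_inner_sub_inner_le_of_norm_sub_le {u v : H} {c : ℝ} (h : ‖u - v‖ ≤ c) (f : H) :
    |⟪u, f⟫ - ⟪v, f⟫| ≤ c * ‖f‖ := by
  calc |⟪u, f⟫ - ⟪v, f⟫| = |⟪u - v, f⟫| := by rw [inner_sub_left]
    _ ≤ ‖u - v‖ * ‖f‖ := abs_real_inner_le_norm _ _
    _ ≤ c * ‖f‖ := mul_le_mul_of_nonneg_right h (norm_nonneg f)

end FeatureMap

theorem Real.sqrt_mul_rpow_eq {t : ℝ} (ht : 0 ≤ t) (c α : ℝ) :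
    √(c * t ^ α) = √c * t ^ (α / 2) := by
  rw [Real.sqrt_mul' c (Real.rpow_nonneg ht α), Real.sqrt_eq_rpow (t ^ α), ← Real.rpow_mul ht,
    mul_one_div]

theorem stmt6_general {H : Type*} [NormedAddCommGroup H] [InnerProductSpace ℝ H]
    {d : ℕ} (X : Set (EuclideanSpace ℝ (Fin d))) (Φ : EuclideanSpace ℝ (Fin d) → H)
    (α L : ℝ)
    (hHolder : ∀ x₁ ∈ X, ∀ x₂ ∈ X, ∀ y₁ ∈ X, ∀ y₂ ∈ X,
      |⟪Φ x₁, Φ x₂⟫ - ⟪Φ y₁, Φ y₂⟫| ≤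
        L * (Real.sqrt (‖x₁ - y₁‖ ^ 2 + ‖x₂ - y₂‖ ^ 2)) ^ α) :
    ∀ f : H, ∀ x ∈ X, ∀ y ∈ X,
      |⟪Φ x, f⟫ - ⟪Φ y, f⟫| ≤ Real.sqrt (2 * L) * ‖f‖ * ‖x - y‖ ^ (α / 2) := by
  intro f x hx y hy
  have hHolder_left : ∀ z ∈ X, |⟪Φ x, Φ z⟫ - ⟪Φ y, Φ z⟫| ≤ L * ‖x - y‖ ^ α := fun z hz => by
    simpa [Real.sqrt_sq (norm_nonneg (x - y))] using hHolder x hx z hz y hy z hz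
  have hΦ : ‖Φ x - Φ y‖ ≤ √(2 * L) * ‖x - y‖ ^ (α / 2) := by
    rw [← Real.sqrt_mul_rpow_eq (norm_nonneg _), mul_assoc]
    exact norm_sub_le_sqrt_of_abs_inner_sub_le (hHolder_left x hx) (hHolder_left y hy)
  rw [mul_right_comm]
  exact abs_inner_sub_inner_le_of_norm_sub_le hΦ f

/-- if the kernel `k(x,y) = ⟪Φ(x), Φ(y)⟫` is Hölder of order `α` (Euclidean norm
on `ℝ^{2d}`), then every `f ∈ H` induces a Hölder-`α/2` function:
`|⟪Φ(x), f⟫ - ⟪Φ(y), f⟫| ≤ √(2L)·‖f‖·‖x-y‖^{α/2}`. -/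
theorem stmt6 {H : Type*} [NormedAddCommGroup H] [InnerProductSpace ℝ H]
    {d : ℕ} (X : Set (EuclideanSpace ℝ (Fin d))) (Φ : EuclideanSpace ℝ (Fin d) → H)
    (α L : ℝ) (hα : α ∈ Set.Ioc (0:ℝ) 1) (hL : 0 < L)
    (hHolder : ∀ x₁ ∈ X, ∀ x₂ ∈ X, ∀ y₁ ∈ X, ∀ y₂ ∈ X,
      |⟪Φ x₁, Φ x₂⟫ - ⟪Φ y₁, Φ y₂⟫| ≤
        L * (Real.sqrt (‖x₁ - y₁‖ ^ 2 + ‖x₂ - y₂‖ ^ 2)) ^ α) :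
    ∀ f : H, ∀ x ∈ X, ∀ y ∈ X,
      |⟪Φ x, f⟫ - ⟪Φ y, f⟫| ≤ Real.sqrt (2 * L) * ‖f‖ * ‖x - y‖ ^ (α / 2) :=
  stmt6_general X Φ α L hHolder
end

section
/- Let (X, 𝒜, μ) be a probability space, H a real separable Hilbert space, and Φ : X → H a strongly measurable map with ‖Φ(x)‖_H ≤ κ for all x ∈ X. Fix f ∈ H and set g(x) := ⟨Φ(x), f⟩, ‖g‖_∞ := sup_{x ∈ X} |g(x)|, and ‖g‖_{L²}² := ∫_X g(x)² dμ(x). Let x_1, …, x_n be i.i.d. samples from μ. Then for every δ ∈ (0,1), with probability at least 1 − δ, ‖ (1/n)·Σ_{i=1}^n g(x_i)·Φ(x_i) − ∫_X g(x)·Φ(x) dμ(x) ‖_H ≤ 2κ·( 2‖g‖_∞/n + ‖g‖_{L²}/√n )·ln(2/δ), where the integral is a Bochner integral in H. -/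
/-!
Pinelis' method. Since `c ↦ cosh (l * √c)` is convex on `[0, ∞)`, `cosh (l * ‖t + y‖)` is bounded
by `cosh (l * ‖t‖) * (1 + (l * ‖y‖) ^ 2 * exp (l * ‖y‖) / 2)` plus a term linear in `⟪t, y⟫`.
For a centred `ξ` with `‖ξ‖ ≤ L` and `E ‖ξ‖² ≤ σ²` the linear term integrates to zero, so
`E cosh (l * ‖t + ξ‖) ≤ (1 + (l * σ) ^ 2 * exp (l * L) / 2) * cosh (l * ‖t‖)`. Iterating over the
independent samples bounds `E cosh (l * ‖∑ ξ i‖)`, and Markov's inequality with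
`l = 1 / (L + σ * √n)` gives `P (‖∑ ξ i‖ > 2 t (L + σ √n)) ≤ 2 exp (-t)` for `t ≥ 1 / 2`.
The theorem is this bound for `ξ = g • Φ - ∫ g • Φ`, where `L = 2 ‖g‖_∞ κ`, `σ = κ ‖g‖_{L²}` and
`t = log (2 / δ)`.
-/

open MeasureTheory Set Real
open scoped RealInnerProductSpace ENNReal

namespace Real

theorem sinh_le_mul_cosh {z : ℝ} (hz : 0 ≤ z) : sinh z ≤ z * cosh z := by
  have hmono : MonotoneOn (fun s => s * cosh s - sinh s) (Ici 0) := by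
    refine monotoneOn_of_hasDerivWithinAt_nonneg (convex_Ici 0) (by fun_prop)
      (fun x _ => (((hasDerivAt_id' x).mul (hasDerivAt_cosh x)).sub
        (hasDerivAt_sinh x)).hasDerivWithinAt) fun x hx => ?_
    rw [interior_Ici] at hx
    have := mul_nonneg (le_of_lt hx) (sinh_nonneg_iff.mpr (le_of_lt hx))
    linarith
  simpa using hmono self_mem_Ici hz hz

theorem monotoneOn_sinh_div_self : MonotoneOn (fun s => sinh s / s) (Ioi 0) := by
  refine monotoneOn_of_hasDerivWithinAt_nonneg (convex_Ioi 0)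
    (continuous_sinh.continuousOn.div continuousOn_id fun x hx => ne_of_gt hx)
    (fun x hx => ((hasDerivAt_sinh x).div (hasDerivAt_id' x)
      (ne_of_gt (interior_subset hx))).hasDerivWithinAt) fun x hx => ?_
  rw [interior_Ioi] at hx
  have := sinh_le_mul_cosh (le_of_lt hx)
  exact div_nonneg (by linarith) (sq_nonneg x)

theorem convexOn_cosh_mul_sqrt {l : ℝ} (hl : 0 < l) :
    ConvexOn ℝ (Ici 0) fun x => cosh (l * √x) := by
  have hderiv (x : ℝ) (hx : 0 < x) : HasDerivAt (fun x => cosh (l * √x))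
      (l ^ 2 / 2 * (sinh (l * √x) / (l * √x))) x := by
    convert ((hasDerivAt_sqrt (ne_of_gt hx)).const_mul l).cosh using 1
    have := sqrt_pos.mpr hx
    field_simp
  have hmono : MonotoneOn (fun x => l ^ 2 / 2 * (sinh (l * √x) / (l * √x))) (Ioi 0) := by
    intro x hx y hy hxy
    dsimp only
    gcongr l ^ 2 / 2 * ?_
    exact monotoneOn_sinh_div_self (mul_pos hl (sqrt_pos.mpr hx))
      (mul_pos hl (sqrt_pos.mpr hy)) (by gcongr)
  rw [← interior_Ici] at hmono
  refine hmono.congr (fun x hx => ?_) |>.convexOn_of_deriv (convex_Ici 0) (by fun_prop)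
    fun x hx => ?_
  · rw [interior_Ici] at hx
    exact (hderiv x hx).deriv.symm
  · rw [interior_Ici] at hx
    exact (hderiv x hx).differentiableAt.differentiableWithinAt

theorem exp_sub_one_sub_le {z : ℝ} (hz : 0 ≤ z) : exp z - 1 - z ≤ z ^ 2 * exp z / 2 := by
  have hmono : MonotoneOn (fun s => s ^ 2 * exp s / 2 - (exp s - 1 - s)) (Ici 0) := by
    refine monotoneOn_of_hasDerivWithinAt_nonneg (convex_Ici 0) (by fun_prop)
      (fun x _ => (((hasDerivAt_pow 2 x).mul (hasDerivAt_exp x)).div_const 2).sub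
        (((hasDerivAt_exp x).sub_const 1).sub (hasDerivAt_id' x)) |>.hasDerivWithinAt)
      fun x hx => ?_
    rw [interior_Ici] at hx
    have h1 := add_one_le_exp (-x)
    have h2 : exp (-x) * exp x = 1 := by rw [← exp_add]; simp
    have h3 := exp_pos x
    nlinarith [mul_le_mul_of_nonneg_right h1 h3.le, sq_nonneg x, mul_pos hx h3]
  simpa [sub_nonneg] using hmono self_mem_Ici hz hz

theorem sq_mul_exp_one_sub_le_one {θ : ℝ} (h0 : 0 ≤ θ) (h1 : θ ≤ 1) :
    θ ^ 2 * exp (1 - θ) ≤ 1 := by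
  have h : θ * exp (1 - θ) ≤ 1 := by
    calc θ * exp (1 - θ) ≤ exp (θ - 1) * exp (1 - θ) := by
          gcongr; linarith [add_one_le_exp (θ - 1)]
      _ = 1 := by rw [← exp_add]; simp
  nlinarith

theorem one_add_sq_mul_exp_pow_le {a b : ℝ} {n : ℕ} (ha : 0 ≤ a) (hb : 0 ≤ b)
    (hab : a + b * √n = 1) : (1 + b ^ 2 * exp a / 2) ^ n ≤ exp (1 / 2) := by
  set θ := b * √n
  have hθ : (n : ℝ) * b ^ 2 = θ ^ 2 := by rw [mul_pow, sq_sqrt n.cast_nonneg]; ring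
  have hexp := sq_mul_exp_one_sub_le_one (by positivity : 0 ≤ θ) (by linarith)
  calc (1 + b ^ 2 * exp a / 2) ^ n ≤ exp (b ^ 2 * exp a / 2) ^ n := by
        gcongr; linarith [add_one_le_exp (b ^ 2 * exp a / 2)]
    _ = exp (θ ^ 2 * exp (1 - θ) / 2) := by
        rw [← exp_nat_mul, ← hθ, show a = 1 - θ by linarith]; congr 1; ring
    _ ≤ exp (1 / 2) := exp_le_exp.mpr (by linarith)

theorem one_half_le_log_two_div {δ : ℝ} (hδ0 : 0 < δ) (hδ1 : δ ≤ 1) : 1 / 2 ≤ log (2 / δ) := by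
  have : log 2 ≤ log (2 / δ) := log_le_log two_pos (le_div_self two_pos.le hδ0 hδ1)
  linarith [log_two_gt_d9]

theorem cosh_mul_le_of_sq_eq {l a b c p : ℝ} (hl : 0 < l) (ha : 0 < a) (hb : 0 < b)
    (hc : 0 ≤ c) (hp : |p| ≤ a * b) (hc2 : c ^ 2 = a ^ 2 + 2 * p + b ^ 2) :
    cosh (l * c) ≤ cosh (l * a) * cosh (l * b) + p / (a * b) * (sinh (l * a) * sinh (l * b)) := by
  have hab : 0 < a * b := mul_pos ha hb
  obtain ⟨hp₁, hp₂⟩ := abs_le.mp hp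
  -- `c ^ 2` is the convex combination of `(a - b) ^ 2` and `(a + b) ^ 2` with these weights
  have hconv := (convexOn_cosh_mul_sqrt hl).2 (mem_Ici.mpr (sq_nonneg (a - b)))
    (mem_Ici.mpr (sq_nonneg (a + b))) (div_nonneg (by linarith : 0 ≤ a * b - p) (by positivity))
    (div_nonneg (by linarith : 0 ≤ a * b + p) (by positivity))
    (show (a * b - p) / (2 * (a * b)) + (a * b + p) / (2 * (a * b)) = 1 by field_simp; ring)
  have hcomb : (a * b - p) / (2 * (a * b)) * (a - b) ^ 2 + (a * b + p) / (2 * (a * b)) * (a + b) ^ 2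
      = c ^ 2 := by
    rw [hc2]; field_simp; ring
  simp only [smul_eq_mul, hcomb, sqrt_sq hc, sqrt_sq_eq_abs, sqrt_sq (by positivity : 0 ≤ a + b)]
    at hconv
  rw [← cosh_abs (l * |a - b|), abs_mul, abs_abs, ← abs_mul, cosh_abs, mul_sub, mul_add,
    cosh_sub, cosh_add] at hconv
  refine hconv.trans_eq ?_
  field_simp
  ring

end Real

theorem cosh_mul_norm_add_le {H : Type*} [NormedAddCommGroup H] [InnerProductSpace ℝ H]
    {l : ℝ} (hl : 0 < l) (t y : H) :
    cosh (l * ‖t + y‖) ≤ cosh (l * ‖t‖) * (1 + (l * ‖y‖) ^ 2 * exp (l * ‖y‖) / 2)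
      + l * sinh (l * ‖t‖) / ‖t‖ * ⟪t, y⟫ := by
  rcases eq_or_ne y 0 with rfl | hy
  · simp
  set a := ‖t‖
  set b := ‖y‖
  have hlb : 0 ≤ l * b := by positivity
  have hsinh_b : l * b ≤ sinh (l * b) := self_le_sinh_iff.mpr hlb
  have hexp_b : cosh (l * b) + sinh (l * b) - l * b ≤ 1 + (l * b) ^ 2 * exp (l * b) / 2 := by
    linarith [cosh_add_sinh (l * b), exp_sub_one_sub_le hlb]
  rcases eq_or_ne t 0 with rfl | ht
  · simp only [zero_add, a, norm_zero, mul_zero, cosh_zero, one_mul, inner_zero_left, add_zero]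
    linarith
  have ha : 0 < a := norm_pos_iff.mpr ht
  have hb : 0 < b := norm_pos_iff.mpr hy
  have hp : ⟪t, y⟫ / (a * b) ≤ 1 := div_le_one_of_le₀ (real_inner_le_norm t y) (by positivity)
  have hsinh_a : 0 ≤ sinh (l * a) := sinh_nonneg_iff.mpr (by positivity)
  have hsinh_cosh_a : sinh (l * a) ≤ cosh (l * a) := (sinh_lt_cosh _).le
  have hsplit : ⟪t, y⟫ / (a * b) * (sinh (l * a) * sinh (l * b)) = l * sinh (l * a) / a * ⟪t, y⟫
      + ⟪t, y⟫ / (a * b) * (sinh (l * a) * (sinh (l * b) - l * b)) := by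
    field_simp
    ring
  calc cosh (l * ‖t + y‖)
      ≤ cosh (l * a) * cosh (l * b) + ⟪t, y⟫ / (a * b) * (sinh (l * a) * sinh (l * b)) :=
        cosh_mul_le_of_sq_eq hl ha hb (norm_nonneg _) (abs_real_inner_le_norm t y)
          (norm_add_sq_real t y)
    _ ≤ cosh (l * a) * cosh (l * b) + (l * sinh (l * a) / a * ⟪t, y⟫
          + cosh (l * a) * (sinh (l * b) - l * b)) := by
        have hgap : 0 ≤ sinh (l * b) - l * b := by linarith
        have := (mul_le_of_le_one_left (mul_nonneg hsinh_a hgap) hp).trans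
          (mul_le_mul_of_nonneg_right hsinh_cosh_a hgap)
        linarith
    _ = cosh (l * a) * (cosh (l * b) + sinh (l * b) - l * b) + l * sinh (l * a) / a * ⟪t, y⟫ := by
        ring
    _ ≤ _ := by gcongr

theorem ofReal_one_sub_le_of_measure_compl_le {α : Type*} [MeasurableSpace α] {ν : Measure α}
    [IsProbabilityMeasure ν] {s : Set α} {δ : ℝ} (hδ : 0 ≤ δ) (h : ν sᶜ ≤ ENNReal.ofReal δ) :
    ENNReal.ofReal (1 - δ) ≤ ν s := by
  rw [ENNReal.ofReal_sub _ hδ, ENNReal.ofReal_one, tsub_le_iff_right]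
  calc 1 = ν (s ∪ sᶜ) := by simp
    _ ≤ ν s + ν sᶜ := measure_union_le _ _
    _ ≤ ν s + ENNReal.ofReal δ := by gcongr

theorem integral_norm_smul_sq_le {X E : Type*} [MeasurableSpace X] {μ : Measure X}
    [NormedAddCommGroup E] [NormedSpace ℝ E] {g : X → ℝ} {Φ : X → E} {κ : ℝ}
    (hg : Integrable (fun x => g x ^ 2) μ) (hΦ : ∀ x, ‖Φ x‖ ≤ κ) :
    ∫ x, ‖g x • Φ x‖ ^ 2 ∂μ ≤ κ ^ 2 * ∫ x, g x ^ 2 ∂μ := by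
  rw [← integral_const_mul]
  refine integral_mono_of_nonneg (.of_forall fun x => sq_nonneg _) (hg.const_mul _)
    (.of_forall fun x => ?_)
  dsimp only
  rw [norm_smul, mul_pow, norm_eq_abs, sq_abs, mul_comm (κ ^ 2)]
  gcongr
  exact hΦ x

theorem integral_norm_sub_integral_sq {X E : Type*} [MeasurableSpace X] {μ : Measure X}
    [IsProbabilityMeasure μ] [NormedAddCommGroup E] [InnerProductSpace ℝ E] [CompleteSpace E]
    {η : X → E} (hη : Integrable η μ) (hη2 : Integrable (fun x => ‖η x‖ ^ 2) μ) :
    ∫ x, ‖η x - ∫ y, η y ∂μ‖ ^ 2 ∂μ = ∫ x, ‖η x‖ ^ 2 ∂μ - ‖∫ x, η x ∂μ‖ ^ 2 := by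
  set m := ∫ x, η x ∂μ
  have hinner : Integrable (fun x => 2 * ⟪η x, m⟫) μ := (hη.inner_const m).const_mul 2
  have hdiff : Integrable (fun x => ‖η x‖ ^ 2 - 2 * ⟪η x, m⟫) μ := hη2.sub hinner
  simp_rw [norm_sub_sq_real]
  have hcross : ∫ x, ⟪η x, m⟫ ∂μ = ‖m‖ ^ 2 := by
    simp_rw [real_inner_comm m]
    rw [integral_inner hη, real_inner_self_eq_norm_sq]
  rw [integral_add hdiff (integrable_const _), integral_sub hη2 hinner, integral_const_mul, hcross]
  simp
  ring

theorem lintegral_comp_add_sum_le {X G : Type*} [MeasurableSpace X] {μ : Measure X}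
    [SigmaFinite μ] [AddCommMonoid G] [TopologicalSpace G] [ContinuousAdd G] {F : G → ℝ≥0∞}
    (hF : Continuous F) {ξ : X → G} (hξ : StronglyMeasurable ξ) {A : ℝ≥0∞}
    (hA : ∀ t, ∫⁻ x, F (t + ξ x) ∂μ ≤ A * F t) (n : ℕ) (t : G) :
    ∫⁻ x, F (t + ∑ i, ξ (x i)) ∂(Measure.pi fun _ : Fin n => μ) ≤ A ^ n * F t := by
  induction n generalizing t with
  | zero => simp
  | succ n ih =>
    have hsum : StronglyMeasurable fun z : Fin n → X => ∑ j, ξ (z j) :=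
      Finset.stronglyMeasurable_fun_sum _ fun j _ => hξ.comp_measurable (measurable_pi_apply j)
    have hmeas : Measurable fun q : X × (Fin n → X) => F (t + (ξ q.1 + ∑ j, ξ (q.2 j))) :=
      (hF.comp_stronglyMeasurable (((hξ.comp_measurable measurable_fst).add
        (hsum.comp_measurable measurable_snd)).const_add t)).measurable
    rw [← ((measurePreserving_piFinSuccAbove (fun _ => μ) 0).symm _).lintegral_comp_emb
      (MeasurableEquiv.measurableEmbedding _)]
    simp_rw [MeasurableEquiv.piFinSuccAbove_symm_apply, Fin.sum_univ_succAbove _ 0,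
      Fin.insertNthEquiv_apply, Fin.insertNth_apply_same, Fin.insertNth_apply_succAbove]
    rw [lintegral_prod _ hmeas.aemeasurable]
    calc ∫⁻ y, ∫⁻ z, F (t + (ξ y + ∑ j, ξ (z j))) ∂(Measure.pi fun _ : Fin n => μ) ∂μ
        ≤ ∫⁻ y, A ^ n * F (t + ξ y) ∂μ := lintegral_mono fun y => by
          simpa only [add_assoc] using ih (t + ξ y)
      _ = A ^ n * ∫⁻ y, F (t + ξ y) ∂μ :=
          lintegral_const_mul _ (hF.comp_stronglyMeasurable (hξ.const_add t)).measurable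
      _ ≤ A ^ (n + 1) * F t := by
          rw [pow_succ, mul_assoc]
          gcongr; exact hA t

section Pinelis

variable {X H : Type*} [MeasurableSpace X] {μ : Measure X} [IsProbabilityMeasure μ]
  [NormedAddCommGroup H] [InnerProductSpace ℝ H] [CompleteSpace H]
  {ξ : X → H} {l L σ : ℝ}

theorem integral_cosh_mul_norm_add_le (hξ : StronglyMeasurable ξ) (hl : 0 < l)
    (hL : ∀ x, ‖ξ x‖ ≤ L) (hmean : ∫ x, ξ x ∂μ = 0) (hvar : ∫ x, ‖ξ x‖ ^ 2 ∂μ ≤ σ ^ 2) (t : H) :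
    ∫ x, cosh (l * ‖t + ξ x‖) ∂μ ≤ (1 + (l * σ) ^ 2 * exp (l * L) / 2) * cosh (l * ‖t‖) := by
  set K := l ^ 2 * exp (l * L) / 2
  set c := l * sinh (l * ‖t‖) / ‖t‖
  have hint : Integrable ξ μ := .of_bound hξ.aestronglyMeasurable L (.of_forall hL)
  have hint2 : Integrable (fun x => ‖ξ x‖ ^ 2) μ :=
    .of_bound (hξ.norm.pow 2).aestronglyMeasurable (L ^ 2) (.of_forall fun x => by
      rw [norm_pow, norm_norm]; gcongr; exact hL x)
  have hpoint (x : X) : cosh (l * ‖t + ξ x‖)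
      ≤ cosh (l * ‖t‖) + cosh (l * ‖t‖) * K * ‖ξ x‖ ^ 2 + c * ⟪t, ξ x⟫ := by
    calc cosh (l * ‖t + ξ x‖)
        ≤ cosh (l * ‖t‖) * (1 + (l * ‖ξ x‖) ^ 2 * exp (l * ‖ξ x‖) / 2) + c * ⟪t, ξ x⟫ :=
          cosh_mul_norm_add_le hl t (ξ x)
      _ ≤ cosh (l * ‖t‖) * (1 + (l * ‖ξ x‖) ^ 2 * exp (l * L) / 2) + c * ⟪t, ξ x⟫ := by
          gcongr; exact hL x
      _ = _ := by ring
  have hquad : Integrable (fun x => cosh (l * ‖t‖) + cosh (l * ‖t‖) * K * ‖ξ x‖ ^ 2) μ :=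
    (integrable_const _).add (hint2.const_mul _)
  have hlin : Integrable (fun x => c * ⟪t, ξ x⟫) μ := (hint.const_inner t).const_mul c
  calc ∫ x, cosh (l * ‖t + ξ x‖) ∂μ
      ≤ ∫ x, cosh (l * ‖t‖) + cosh (l * ‖t‖) * K * ‖ξ x‖ ^ 2 + c * ⟪t, ξ x⟫ ∂μ :=
        integral_mono_of_nonneg (.of_forall fun x => (cosh_pos _).le) (hquad.add hlin)
          (.of_forall hpoint)
    _ = cosh (l * ‖t‖) + cosh (l * ‖t‖) * K * ∫ x, ‖ξ x‖ ^ 2 ∂μ := by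
        rw [integral_add hquad hlin, integral_add (integrable_const _) (hint2.const_mul _),
          integral_const_mul, integral_const_mul, integral_inner hint, hmean]
        simp
    _ ≤ cosh (l * ‖t‖) + cosh (l * ‖t‖) * K * σ ^ 2 := by gcongr
    _ = (1 + (l * σ) ^ 2 * exp (l * L) / 2) * cosh (l * ‖t‖) := by ring

theorem measure_le_norm_sum_le (hξ : StronglyMeasurable ξ) (hl : 0 < l)
    (hL : ∀ x, ‖ξ x‖ ≤ L) (hmean : ∫ x, ξ x ∂μ = 0) (hvar : ∫ x, ‖ξ x‖ ^ 2 ∂μ ≤ σ ^ 2)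
    (n : ℕ) {s : ℝ} (hs : 0 ≤ s) :
    Measure.pi (fun _ : Fin n => μ) {x | s ≤ ‖∑ i, ξ (x i)‖}
      ≤ ENNReal.ofReal ((1 + (l * σ) ^ 2 * exp (l * L) / 2) ^ n / cosh (l * s)) := by
  set A := 1 + (l * σ) ^ 2 * exp (l * L) / 2
  have hcosh_meas (t : H) : StronglyMeasurable fun x => cosh (l * ‖t + ξ x‖) :=
    (by fun_prop : Continuous fun y : H => cosh (l * ‖t + y‖)).comp_stronglyMeasurable hξ
  have hstep (t : H) : ∫⁻ x, ENNReal.ofReal (cosh (l * ‖t + ξ x‖)) ∂μ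
      ≤ ENNReal.ofReal A * ENNReal.ofReal (cosh (l * ‖t‖)) := by
    have hint : Integrable (fun x => cosh (l * ‖t + ξ x‖)) μ := by
      refine .of_bound (hcosh_meas t).aestronglyMeasurable (cosh (l * (‖t‖ + L)))
        (.of_forall fun x => ?_)
      have h : l * ‖t + ξ x‖ ≤ l * (‖t‖ + L) := by
        gcongr; exact (norm_add_le _ _).trans (by gcongr; exact hL x)
      rw [norm_of_nonneg (cosh_pos _).le, cosh_le_cosh]
      exact abs_le_abs h (by linarith [mul_nonneg hl.le (norm_nonneg (t + ξ x))])
    rw [← ofReal_integral_eq_lintegral_ofReal hint (.of_forall fun x => (cosh_pos _).le),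
      ← ENNReal.ofReal_mul (by positivity)]
    exact ENNReal.ofReal_le_ofReal (integral_cosh_mul_norm_add_le hξ hl hL hmean hvar t)
  have hF : Continuous fun y : H => ENNReal.ofReal (cosh (l * ‖y‖)) :=
    ENNReal.continuous_ofReal.comp (by fun_prop)
  have hmgf := lintegral_comp_add_sum_le hF hξ hstep n 0
  simp only [zero_add, norm_zero, mul_zero, cosh_zero, ENNReal.ofReal_one, mul_one] at hmgf
  have hsum : StronglyMeasurable fun x : Fin n → X => ∑ i, ξ (x i) :=
    Finset.stronglyMeasurable_fun_sum _ fun i _ => hξ.comp_measurable (measurable_pi_apply i)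
  calc Measure.pi (fun _ : Fin n => μ) {x | s ≤ ‖∑ i, ξ (x i)‖}
      ≤ Measure.pi (fun _ : Fin n => μ)
          {x | ENNReal.ofReal (cosh (l * s)) ≤ ENNReal.ofReal (cosh (l * ‖∑ i, ξ (x i)‖))} := by
        refine measure_mono fun x hx => ENNReal.ofReal_le_ofReal ?_
        rw [cosh_le_cosh, abs_of_nonneg (by positivity), abs_of_nonneg (by positivity)]
        exact mul_le_mul_of_nonneg_left hx hl.le
    _ ≤ (∫⁻ x, ENNReal.ofReal (cosh (l * ‖∑ i, ξ (x i)‖)) ∂(Measure.pi fun _ : Fin n => μ))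
          / ENNReal.ofReal (cosh (l * s)) :=
        meas_ge_le_lintegral_div (hF.comp_stronglyMeasurable hsum).measurable.aemeasurable
          (by simp [cosh_pos]) ENNReal.ofReal_ne_top
    _ ≤ ENNReal.ofReal A ^ n / ENNReal.ofReal (cosh (l * s)) := by gcongr
    _ = ENNReal.ofReal (A ^ n / cosh (l * s)) := by
        rw [ENNReal.ofReal_div_of_pos (cosh_pos _), ENNReal.ofReal_pow (by positivity)]

theorem measure_lt_norm_sum_le (hξ : StronglyMeasurable ξ) (hσ : 0 ≤ σ)
    (hL : ∀ x, ‖ξ x‖ ≤ L) (hmean : ∫ x, ξ x ∂μ = 0) (hvar : ∫ x, ‖ξ x‖ ^ 2 ∂μ ≤ σ ^ 2)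
    (n : ℕ) {t : ℝ} (ht : 1 / 2 ≤ t) :
    Measure.pi (fun _ : Fin n => μ) {x | 2 * t * (L + σ * √n) < ‖∑ i, ξ (x i)‖}
      ≤ ENNReal.ofReal (2 * exp (-t)) := by
  have := nonempty_of_isProbabilityMeasure μ
  have hL0 : 0 ≤ L := (norm_nonneg _).trans (hL (Classical.arbitrary X))
  set D := L + σ * √n
  rcases (show 0 ≤ D by positivity).eq_or_lt with hD | hD
  · have hξ0 (x : X) : ξ x = 0 :=
      norm_le_zero_iff.mp ((hL x).trans (by nlinarith [mul_nonneg hσ (sqrt_nonneg n)]))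
    simp [hξ0, ← hD]
  set l := D⁻¹
  have hlD : l * D = 1 := inv_mul_cancel₀ hD.ne'
  have hmgf : (1 + (l * σ) ^ 2 * exp (l * L) / 2) ^ n ≤ exp (1 / 2) :=
    one_add_sq_mul_exp_pow_le (by positivity) (by positivity) (by rw [← hlD]; ring)
  have hcosh : exp (2 * t) / 2 ≤ cosh (l * (2 * t * D)) := by
    rw [mul_left_comm, hlD, mul_one, cosh_eq]
    linarith [exp_pos (-(2 * t))]
  calc Measure.pi (fun _ : Fin n => μ) {x | 2 * t * D < ‖∑ i, ξ (x i)‖}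
      ≤ Measure.pi (fun _ : Fin n => μ) {x | 2 * t * D ≤ ‖∑ i, ξ (x i)‖} :=
        measure_mono (ofPred_subset_ofPred.mpr fun x => le_of_lt)
    _ ≤ ENNReal.ofReal ((1 + (l * σ) ^ 2 * exp (l * L) / 2) ^ n / cosh (l * (2 * t * D))) :=
        measure_le_norm_sum_le hξ (inv_pos.mpr hD) hL hmean hvar n (by positivity)
    _ ≤ ENNReal.ofReal (exp (1 / 2) / (exp (2 * t) / 2)) :=
        ENNReal.ofReal_le_ofReal (div_le_div₀ (exp_pos _).le hmgf (by positivity) hcosh)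
    _ ≤ ENNReal.ofReal (2 * exp (-t)) := by
        refine ENNReal.ofReal_le_ofReal ?_
        rw [div_div_eq_mul_div, mul_comm, mul_div_assoc, ← exp_sub]
        gcongr
        linarith

theorem measure_lt_norm_average_sub_integral_le {η : X → H} (hη : StronglyMeasurable η)
    {C : ℝ} (hσ : 0 ≤ σ) (hC : ∀ x, ‖η x‖ ≤ C) (hvar : ∫ x, ‖η x‖ ^ 2 ∂μ ≤ σ ^ 2)
    {n : ℕ} (hn : 0 < n) {t : ℝ} (ht : 1 / 2 ≤ t) :
    Measure.pi (fun _ : Fin n => μ)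
        {x | 2 * t * (2 * C / n + σ / √n) < ‖(1 / n : ℝ) • ∑ i, η (x i) - ∫ y, η y ∂μ‖}
      ≤ ENNReal.ofReal (2 * exp (-t)) := by
  set m := ∫ y, η y ∂μ
  have hint : Integrable η μ := .of_bound hη.aestronglyMeasurable C (.of_forall hC)
  have hint2 : Integrable (fun x => ‖η x‖ ^ 2) μ :=
    .of_bound (hη.norm.pow 2).aestronglyMeasurable (C ^ 2) (.of_forall fun x => by
      rw [norm_pow, norm_norm]; gcongr; exact hC x)
  have hm : ‖m‖ ≤ C := by
    simpa using norm_integral_le_of_norm_le_const (μ := μ) (.of_forall hC)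
  have hbound (x : X) : ‖η x - m‖ ≤ 2 * C := by linarith [norm_sub_le (η x) m, hC x]
  have hmean : ∫ x, (η x - m) ∂μ = 0 := by simp [integral_sub hint (integrable_const m), m]
  have hvar' : ∫ x, ‖η x - m‖ ^ 2 ∂μ ≤ σ ^ 2 := by
    rw [integral_norm_sub_integral_sq hint hint2]
    linarith [sq_nonneg ‖m‖]
  refine (measure_mono fun x hx => ?_).trans
    (measure_lt_norm_sum_le (hη.sub stronglyMeasurable_const) hσ hbound hmean hvar' n ht)
  have hn' : (0 : ℝ) < n := Nat.cast_pos.mpr hn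
  have havg : (1 / n : ℝ) • ∑ i, η (x i) - m = (1 / n : ℝ) • ∑ i, (η (x i) - m) := by
    rw [Finset.sum_sub_distrib, smul_sub, Finset.sum_const, Finset.card_univ, Fintype.card_fin,
      ← Nat.cast_smul_eq_nsmul ℝ, smul_smul, one_div_mul_cancel hn'.ne', one_smul]
  have hsqrt : σ / √n = σ * √n / n := by
    have := sqrt_pos.mpr hn'
    field_simp
    rw [sq_sqrt hn'.le]
  simp only [mem_ofPred_eq, havg, norm_smul, norm_div, norm_one, RCLike.norm_natCast, hsqrt,
    ← add_div, mul_div_assoc', one_div_mul_eq_div] at hx ⊢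
  exact (div_lt_div_iff_of_pos_right hn').mp hx

end Pinelis

theorem stmt7_general {X : Type*} [MeasurableSpace X] (μ : Measure X) [IsProbabilityMeasure μ]
    {H : Type*} [NormedAddCommGroup H] [InnerProductSpace ℝ H] [CompleteSpace H]
    (Φ : X → H) (hΦ : StronglyMeasurable Φ) (κ : ℝ)
    (hΦbound : ∀ x, ‖Φ x‖ ≤ κ) (f : H)
    (n : ℕ) (hn : 0 < n) (δ : ℝ) (hδ : δ ∈ Set.Ioo (0:ℝ) 1) :
    ENNReal.ofReal (1 - δ) ≤
      Measure.pi (fun _ : Fin n => μ)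
        {x : Fin n → X |
          ‖(1 / n : ℝ) • ∑ i, ⟪Φ (x i), f⟫ • Φ (x i) - ∫ t, ⟪Φ t, f⟫ • Φ t ∂μ‖ ≤
            2 * κ * (2 * (⨆ t : X, |⟪Φ t, f⟫|) / n +
              Real.sqrt (∫ t, ⟪Φ t, f⟫ ^ 2 ∂μ) / Real.sqrt n) * Real.log (2 / δ)} := by
  obtain ⟨hδ0, hδ1⟩ := hδ
  have := nonempty_of_isProbabilityMeasure μ
  have hκ : 0 ≤ κ := (norm_nonneg _).trans (hΦbound (Classical.arbitrary X))
  set M := ⨆ t : X, |⟪Φ t, f⟫|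
  set σ := √(∫ t, ⟪Φ t, f⟫ ^ 2 ∂μ)
  set T := log (2 / δ)
  have hg : StronglyMeasurable fun x => ⟪Φ x, f⟫ :=
    (continuous_id.inner continuous_const).comp_stronglyMeasurable hΦ
  have hgM (x : X) : |⟪Φ x, f⟫| ≤ M :=
    le_ciSup ⟨κ * ‖f‖, forall_mem_range.mpr fun y => (abs_real_inner_le_norm _ _).trans
      (by gcongr; exact hΦbound y)⟩ x
  have hC (x : X) : ‖⟪Φ x, f⟫ • Φ x‖ ≤ M * κ := by
    rw [norm_smul, norm_eq_abs]
    exact mul_le_mul (hgM x) (hΦbound x) (norm_nonneg _) ((abs_nonneg _).trans (hgM x))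
  have hvar : ∫ x, ‖⟪Φ x, f⟫ • Φ x‖ ^ 2 ∂μ ≤ (κ * σ) ^ 2 := by
    rw [mul_pow, sq_sqrt (integral_nonneg fun x => sq_nonneg _)]
    refine integral_norm_smul_sq_le (.of_bound (hg.pow 2).aestronglyMeasurable (M ^ 2)
      (.of_forall fun x => ?_)) hΦbound
    rw [norm_pow, norm_eq_abs]
    exact pow_le_pow_left₀ (abs_nonneg _) (hgM x) 2
  have htail := measure_lt_norm_average_sub_integral_le (μ := μ)
    (η := fun x => ⟪Φ x, f⟫ • Φ x) (hg.smul hΦ)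
    (mul_nonneg hκ (sqrt_nonneg _)) hC hvar hn (one_half_le_log_two_div hδ0 hδ1.le)
  rw [show 2 * exp (-T) = δ by rw [exp_neg, exp_log (by positivity)]; field_simp] at htail
  refine ofReal_one_sub_le_of_measure_compl_le hδ0.le (le_of_eq_of_le (congrArg _ ?_) htail)
  ext x
  rw [mem_compl_iff, mem_ofPred_eq, mem_ofPred_eq, not_le,
    show 2 * κ * (2 * M / n + σ / √n) * T = 2 * T * (2 * (M * κ) / n + κ * σ / √n) by ring]

/-- concentration of the empirical covariance applied to a fixed `f`. With
`g(x) = ⟪Φ(x), f⟫`, i.i.d. samples modeled by the product measure on `Fin n → X`,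
with probability at least `1-δ`:
`‖(1/n)∑ g(x_i)Φ(x_i) - ∫ g(x)Φ(x) dμ‖ ≤ 2κ(2‖g‖_∞/n + ‖g‖_{L²}/√n)·log(2/δ)`. -/
theorem stmt7 {X : Type*} [MeasurableSpace X] (μ : Measure X) [IsProbabilityMeasure μ]
    {H : Type*} [NormedAddCommGroup H] [InnerProductSpace ℝ H] [CompleteSpace H]
    [TopologicalSpace.SeparableSpace H]
    (Φ : X → H) (hΦ : StronglyMeasurable Φ) (κ : ℝ) (hκ : 0 < κ)
    (hΦbound : ∀ x, ‖Φ x‖ ≤ κ) (f : H)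
    (n : ℕ) (hn : 0 < n) (δ : ℝ) (hδ : δ ∈ Set.Ioo (0:ℝ) 1) :
    ENNReal.ofReal (1 - δ) ≤
      Measure.pi (fun _ : Fin n => μ)
        {x : Fin n → X |
          ‖(1 / n : ℝ) • ∑ i, ⟪Φ (x i), f⟫ • Φ (x i) - ∫ t, ⟪Φ t, f⟫ • Φ t ∂μ‖ ≤
            2 * κ * (2 * (⨆ t : X, |⟪Φ t, f⟫|) / n +
              Real.sqrt (∫ t, ⟪Φ t, f⟫ ^ 2 ∂μ) / Real.sqrt n) * Real.log (2 / δ)} :=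
  stmt7_general μ Φ hΦ κ hΦbound f n hn δ hδ
end

section
/- Let H be a separable complex Hilbert space and let A, B be bounded positive (self-adjoint, nonnegative) linear operators on H. Then for every s ∈ [0,1], ‖A^s B^s‖ ≤ ‖AB‖^s, where A^s and B^s are the fractional powers defined by the continuous functional calculus and ‖·‖ is the operator norm. -/
/-!
Write `f u = ‖a ^ u * b ^ u‖`. By the C*-identity, `f ((r + t) / 2) ^ 2` is the norm, hence the
spectral radius, of the self-adjoint element `b ^ m * a ^ (r + t) * b ^ m` with `m = (r + t) / 2`.
Since `xy` and `yx` have the same spectral radius, this equals the spectral radius of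
`(a ^ r * b ^ r) * (b ^ t * a ^ t)`, which is at most `f r * f t`. So `f` is midpoint
log-convex; with `f 0 ≤ 1` this gives `f u ≤ f 1 ^ u` at dyadic `u ∈ [0, 1]`, and continuity of
`u ↦ a ^ u` for `u > 0` extends the bound to all of `[0, 1]`.
-/

open Filter Topology Set NNReal

section MidpointLogConvex

variable {f : ℝ → ℝ} (hf : ∀ x, 0 ≤ f x) (hf0 : f 0 ≤ 1)
  (hmid : ∀ r ∈ Icc (0 : ℝ) 1, ∀ t ∈ Icc (0 : ℝ) 1, f ((r + t) / 2) ^ 2 ≤ f r * f t)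
include hf hf0 hmid

lemma apply_dyadic_le_apply_one_rpow (n k : ℕ) (hk : k ≤ 2 ^ n) :
    f (k / 2 ^ n) ≤ f 1 ^ ((k : ℝ) / 2 ^ n) := by
  induction n generalizing k with
  | zero =>
    obtain rfl | rfl : k = 0 ∨ k = 1 := by omega
    · simpa using hf0
    · simp
  | succ n ih =>
    have hmem : ∀ j : ℕ, j ≤ 2 ^ n → (j : ℝ) / 2 ^ n ∈ Icc (0 : ℝ) 1 := fun j hj =>
      ⟨by positivity, div_le_one_of_le₀ (by exact_mod_cast hj) (by positivity)⟩
    obtain ⟨j, rfl | rfl⟩ := Nat.even_or_odd' k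
    · have hj : j ≤ 2 ^ n := by rw [pow_succ] at hk; omega
      convert ih j hj using 2 <;> push_cast <;> ring
    · have hj : j + 1 ≤ 2 ^ n := by rw [pow_succ] at hk; omega
      set r : ℝ := j / 2 ^ n
      set t : ℝ := ((j + 1 : ℕ) : ℝ) / 2 ^ n
      have hrt : ((2 * j + 1 : ℕ) : ℝ) / 2 ^ (n + 1) = (r + t) / 2 := by
        simp only [r, t]; push_cast; ring
      rw [hrt, ← pow_le_pow_iff_left₀ (hf _) (Real.rpow_nonneg (hf 1) _) two_ne_zero]
      calc f ((r + t) / 2) ^ 2 ≤ f r * f t := hmid r (hmem j (by omega)) t (hmem (j + 1) hj)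
        _ ≤ f 1 ^ r * f 1 ^ t :=
          mul_le_mul (ih j (by omega)) (ih (j + 1) hj) (hf _) (Real.rpow_nonneg (hf 1) _)
        _ = (f 1 ^ ((r + t) / 2)) ^ 2 := by
          rw [← Real.rpow_add_of_nonneg (hf 1) (hmem j (by omega)).1 (hmem (j + 1) hj).1,
            ← Real.rpow_mul_natCast (hf 1), Nat.cast_ofNat, div_mul_cancel₀ _ two_ne_zero]

theorem apply_le_apply_one_rpow_of_sq_midpoint_le (hcont : ContinuousOn f (Ioc 0 1)) {s : ℝ}
    (hs : s ∈ Icc (0 : ℝ) 1) : f s ≤ f 1 ^ s := by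
  obtain rfl | hs0 := hs.1.eq_or_lt
  · simpa using hf0
  set q : ℕ → ℝ := fun n => ⌈s * 2 ^ n⌉₊ / 2 ^ n
  have hq_le : ∀ n, ⌈s * 2 ^ n⌉₊ ≤ 2 ^ n := fun n => by
    rw [Nat.ceil_le]; push_cast; nlinarith [hs.2, pow_pos (two_pos (α := ℝ)) n]
  have hq : Tendsto q atTop (𝓝[Ioc 0 1] s) := by
    refine tendsto_nhdsWithin_iff.2 ⟨(tendsto_nat_ceil_mul_div_atTop hs.1).comp
      (tendsto_pow_atTop_atTop_of_one_lt one_lt_two), Eventually.of_forall fun n => ⟨?_, ?_⟩⟩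
    · exact hs0.trans_le ((le_div_iff₀ (by positivity)).2 (Nat.le_ceil _))
    · exact div_le_one_of_le₀ (by exact_mod_cast hq_le n) (by positivity)
  have hrpow : ContinuousAt (fun x => f 1 ^ x) s := Real.continuousAt_const_rpow' hs0.ne'
  exact le_of_tendsto_of_tendsto' ((hcont s ⟨hs0, hs.2⟩).tendsto.comp hq)
    (hrpow.tendsto.comp (tendsto_nhdsWithin_iff.1 hq).1)
    fun n => apply_dyadic_le_apply_one_rpow hf hf0 hmid n _ (hq_le n)

end MidpointLogConvex

lemma NNReal.tendstoUniformlyOn_rpow_of_isCompact {K : Set ℝ≥0} (hK : IsCompact K) {y : ℝ}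
    (hy : 0 < y) :
    TendstoUniformlyOn (fun (u : ℝ) (x : ℝ≥0) => x ^ u) (· ^ y) (𝓝 y) K := by
  have hU : Icc (y / 2) (2 * y) ∈ 𝓝 y := Icc_mem_nhds (by linarith) (by linarith)
  have hcont : ContinuousOn (fun p : ℝ × ℝ≥0 => p.2 ^ p.1) (Icc (y / 2) (2 * y) ×ˢ K) :=
    fun p hp => ContinuousAt.continuousWithinAt <|
      (NNReal.continuousAt_rpow (x := p.2) (Or.inr (by linarith [hp.1.1]))).comp
        (f := Prod.swap) continuous_swap.continuousAt
  simpa only [nhdsWithin_eq_nhds.2 hU] using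
    ((isCompact_Icc.prod hK).uniformContinuousOn_of_continuous hcont).tendstoUniformlyOn
      (mem_of_mem_nhds hU)

namespace CFC

variable {A : Type*} [PartialOrder A] [Ring A] [StarRing A] [TopologicalSpace A]
  [StarOrderedRing A] [Algebra ℝ A] [ContinuousFunctionalCalculus ℝ A IsSelfAdjoint]
  [NonnegSpectrumClass ℝ A]

lemma rpow_add_of_nonneg (a : A) {x y : ℝ} (hx : 0 ≤ x) (hy : 0 ≤ y) :
    a ^ (x + y) = a ^ x * a ^ y := by
  simp only [rpow_def]
  rw [← cfc_mul _ _ a]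
  exact cfc_congr fun z _ => NNReal.rpow_add_of_nonneg z hx hy

lemma continuousOn_const_rpow (a : A) : ContinuousOn (fun y : ℝ => a ^ y) (Ioi 0) := by
  intro y hy
  refine (continuousAt_cfc_fun (NNReal.tendstoUniformlyOn_rpow_of_isCompact
    (ContinuousFunctionalCalculus.isCompact_spectrum a) hy) ?_).continuousWithinAt
  filter_upwards [Ioi_mem_nhds hy] with u hu
  exact (NNReal.continuous_rpow_const hu.le).continuousOn

end CFC

lemma spectralRadius_mul_comm {𝕜 A : Type*} [NormedField 𝕜] [Ring A] [Algebra 𝕜 A] (a b : A) :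
    spectralRadius 𝕜 (a * b) = spectralRadius 𝕜 (b * a) := by
  suffices ∀ x y : A, spectralRadius 𝕜 (x * y) ≤ spectralRadius 𝕜 (y * x) from
    le_antisymm (this a b) (this b a)
  refine fun x y => iSup₂_le fun k hk => ?_
  obtain rfl | hk0 := eq_or_ne k 0
  · simp
  · have : k ∈ spectrum 𝕜 (y * x) \ {0} := spectrum.nonzero_mul_comm (𝕜 := 𝕜) x y ▸ ⟨hk, hk0⟩
    exact le_iSup₂ (f := fun k (_ : k ∈ spectrum 𝕜 (y * x)) => (‖k‖₊ : ENNReal)) k this.1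

section CStarAlgebra

variable {A : Type*} [CStarAlgebra A] [PartialOrder A] [StarOrderedRing A]

lemma sq_norm_rpow_mul_rpow_midpoint_le (a b : A) {r t : ℝ} (hr : 0 ≤ r) (ht : 0 ≤ t) :
    ‖a ^ ((r + t) / 2) * b ^ ((r + t) / 2)‖ ^ 2 ≤ ‖a ^ r * b ^ r‖ * ‖a ^ t * b ^ t‖ := by
  obtain _ | _ := subsingleton_or_nontrivial A
  · simp [Subsingleton.elim _ (0 : A)]
  set m := (r + t) / 2
  have hm : 0 ≤ m := by positivity
  have hmm : m + m = r + t := by ring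
  have hsa : ∀ (c : A) (u : ℝ), IsSelfAdjoint (c ^ u) := fun c u => CFC.rpow_nonneg.isSelfAdjoint
  have key : star (a ^ m * b ^ m) * (a ^ m * b ^ m) = b ^ m * (a ^ (r + t) * b ^ m) := by
    rw [star_mul, (hsa a m).star_eq, (hsa b m).star_eq, ← hmm, CFC.rpow_add_of_nonneg a hm hm]
    noncomm_ring
  have hsr : spectralRadius ℂ (b ^ m * (a ^ (r + t) * b ^ m)) =
      spectralRadius ℂ (a ^ r * b ^ r * (b ^ t * a ^ t)) := by
    rw [spectralRadius_mul_comm, mul_assoc, ← CFC.rpow_add_of_nonneg b hm hm, hmm,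
      CFC.rpow_add_of_nonneg b hr ht, add_comm r t, CFC.rpow_add_of_nonneg a ht hr,
      show a ^ t * a ^ r * (b ^ r * b ^ t) = a ^ t * (a ^ r * b ^ r * b ^ t) by noncomm_ring,
      spectralRadius_mul_comm, mul_assoc (a ^ r * b ^ r)]
  have hswap : ‖b ^ t * a ^ t‖₊ = ‖a ^ t * b ^ t‖₊ := by
    rw [← nnnorm_star, star_mul, (hsa a t).star_eq, (hsa b t).star_eq]
  have hsa' : IsSelfAdjoint (b ^ m * (a ^ (r + t) * b ^ m)) :=
    key ▸ IsSelfAdjoint.star_mul_self _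
  have hnn : ‖a ^ m * b ^ m‖₊ ^ 2 ≤ ‖a ^ r * b ^ r‖₊ * ‖a ^ t * b ^ t‖₊ := by
    rw [sq, ← CStarRing.nnnorm_star_mul_self, key, ← ENNReal.coe_le_coe,
      ← hsa'.spectralRadius_eq_nnnorm, hsr, ← hswap, ENNReal.coe_mul]
    calc _ ≤ (‖a ^ r * b ^ r * (b ^ t * a ^ t)‖₊ : ENNReal) := spectrum.spectralRadius_le_nnnorm _
      _ ≤ _ := by exact_mod_cast nnnorm_mul_le _ _
  exact_mod_cast hnn

theorem CStarAlgebra.norm_rpow_mul_rpow_le {a b : A} (ha : 0 ≤ a) (hb : 0 ≤ b) {s : ℝ}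
    (hs : s ∈ Icc (0 : ℝ) 1) : ‖a ^ s * b ^ s‖ ≤ ‖a * b‖ ^ s := by
  obtain _ | _ := subsingleton_or_nontrivial A
  · simp only [Subsingleton.elim _ (0 : A), norm_zero]
    positivity
  have hcont : ContinuousOn (fun u : ℝ => ‖a ^ u * b ^ u‖) (Ioc 0 1) :=
    ((CFC.continuousOn_const_rpow a).mul (CFC.continuousOn_const_rpow b)).norm.mono
      Ioc_subset_Ioi_self
  simpa [CFC.rpow_one a ha, CFC.rpow_one b hb] using
    apply_le_apply_one_rpow_of_sq_midpoint_le (fun _ => norm_nonneg _)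
      (by simp [CFC.rpow_zero a ha, CFC.rpow_zero b hb])
      (fun r hr t ht => sq_norm_rpow_mul_rpow_midpoint_le a b hr.1 ht.1) hcont hs

end CStarAlgebra

theorem stmt14_general {H : Type*} [NormedAddCommGroup H] [InnerProductSpace ℂ H] [CompleteSpace H]
    (A B : H →L[ℂ] H) (hA : A.IsPositive) (hB : B.IsPositive)
    (s : ℝ) (hs : s ∈ Set.Icc (0:ℝ) 1) :
    ‖cfc (fun t : ℝ => t ^ s) A * cfc (fun t : ℝ => t ^ s) B‖ ≤ ‖A * B‖ ^ s := by
  have hA' : 0 ≤ A := (A.nonneg_iff_isPositive).2 hA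
  have hB' : 0 ≤ B := (B.nonneg_iff_isPositive).2 hB
  rw [← CFC.rpow_eq_cfc_real hA', ← CFC.rpow_eq_cfc_real hB']
  exact CStarAlgebra.norm_rpow_mul_rpow_le hA' hB' hs

/-- Cordes' inequality: for bounded positive operators `A, B` on a separable
complex Hilbert space and `s ∈ [0,1]`, `‖A^s B^s‖ ≤ ‖AB‖^s`, where fractional powers are
taken via the continuous functional calculus. -/
theorem stmt14 {H : Type*} [NormedAddCommGroup H] [InnerProductSpace ℂ H] [CompleteSpace H]
    [TopologicalSpace.SeparableSpace H]
    (A B : H →L[ℂ] H) (hA : A.IsPositive) (hB : B.IsPositive)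
    (s : ℝ) (hs : s ∈ Set.Icc (0:ℝ) 1) :
    ‖cfc (fun t : ℝ => t ^ s) A * cfc (fun t : ℝ => t ^ s) B‖ ≤ ‖A * B‖ ^ s :=
  stmt14_general A B hA hB s hs
end

section
/- Let H be a separable complex Hilbert space, let A and B be bounded positive self-adjoint operators on H, let λ > 0, and suppose ‖ (A+λ)^{-1/2} (A − B) (A+λ)^{-1/2} ‖ ≤ a for some a ∈ [0,1), where (A+λ)^{±1/2} and (B+λ)^{±1/2} denote the positive square roots of the (boundedly invertible) positive operators A+λ and B+λ and their inverses. Then ‖ (A+λ)^{-1/2} (B+λ)^{1/2} ‖² ≤ 1 + a and ‖ (A+λ)^{1/2} (B+λ)^{-1/2} ‖² ≤ 1/(1 − a). -/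
/-!
Write `Rₓ = (x + λ)^{-1/2}`, `Sₓ = (x + λ)^{1/2}` and `d = Rₓ (x - y) Rₓ`. Since
`Rₓ (x + λ) Rₓ = 1`, the C⋆-identity gives `‖Rₓ S_y‖² = ‖Rₓ (y + λ) Rₓ‖ = ‖1 - d‖ ≤ 1 + ‖d‖`.
For the other bound, conjugating `d ≤ ‖d‖` by `Sₓ` gives `x - y ≤ ‖d‖ (x + λ)`, that is
`(1 - ‖d‖)(x + λ) ≤ y + λ`, and conjugating this by `R_y` gives `(1 - ‖d‖) M⋆M ≤ 1`
for `M = Sₓ R_y`.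
-/

namespace CStarAlgebra

variable {𝒜 : Type*} [CStarAlgebra 𝒜]

lemma norm_one_le_one : ‖(1 : 𝒜)‖ ≤ 1 := by
  obtain _ | _ := subsingleton_or_nontrivial 𝒜
  · simp [Subsingleton.elim (1 : 𝒜) 0]
  · rw [CStarRing.norm_one]

variable [PartialOrder 𝒜] [StarOrderedRing 𝒜] {x y : 𝒜} {lambda : ℝ}

lemma cfc_sqrt_add_const_mul_self (hx : 0 ≤ x) (hlam : 0 ≤ lambda) :
    cfc (fun t : ℝ => √(t + lambda)) x * cfc (fun t : ℝ => √(t + lambda)) x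
      = x + algebraMap ℝ 𝒜 lambda := by
  rw [← cfc_mul (fun t : ℝ => √(t + lambda)) _ x]
  conv_rhs => rw [← cfc_id' ℝ x, ← cfc_add_const lambda (fun t : ℝ => t) x]
  refine cfc_congr fun t ht => Real.mul_self_sqrt ?_
  have := spectrum_nonneg_of_nonneg hx ht
  positivity

lemma cfc_inv_sqrt_add_const_mul_cfc_sqrt_add_const (hx : 0 ≤ x) (hlam : 0 < lambda) :
    cfc (fun t : ℝ => (√(t + lambda))⁻¹) x * cfc (fun t : ℝ => √(t + lambda)) x = 1 := by
  have hsqrt : ∀ t ∈ spectrum ℝ x, √(t + lambda) ≠ 0 := fun t ht => by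
    have := spectrum_nonneg_of_nonneg hx ht
    positivity
  rw [← cfc_mul (fun t : ℝ => (√(t + lambda))⁻¹) _ x (ContinuousOn.inv₀ (by fun_prop) hsqrt),
    ← cfc_one ℝ x]
  exact cfc_congr fun t ht => inv_mul_cancel₀ (hsqrt t ht)

lemma cfc_sqrt_add_const_mul_cfc_inv_sqrt_add_const (hx : 0 ≤ x) (hlam : 0 < lambda) :
    cfc (fun t : ℝ => √(t + lambda)) x * cfc (fun t : ℝ => (√(t + lambda))⁻¹) x = 1 :=
  (cfc_commute_cfc (R := ℝ) _ _ x).eq ▸ cfc_inv_sqrt_add_const_mul_cfc_sqrt_add_const hx hlam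

lemma cfc_inv_sqrt_add_const_conj (hx : 0 ≤ x) (hlam : 0 < lambda) :
    cfc (fun t : ℝ => (√(t + lambda))⁻¹) x * (x + algebraMap ℝ 𝒜 lambda)
      * cfc (fun t : ℝ => (√(t + lambda))⁻¹) x = 1 := by
  rw [← cfc_sqrt_add_const_mul_self hx hlam.le, ← mul_assoc,
    cfc_inv_sqrt_add_const_mul_cfc_sqrt_add_const hx hlam, one_mul,
    cfc_sqrt_add_const_mul_cfc_inv_sqrt_add_const hx hlam]

lemma cfc_sqrt_add_const_conj_cfc_inv_sqrt_add_const_conj (hx : 0 ≤ x) (hlam : 0 < lambda)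
    (z : 𝒜) :
    cfc (fun t : ℝ => √(t + lambda)) x * (cfc (fun t : ℝ => (√(t + lambda))⁻¹) x * z
      * cfc (fun t : ℝ => (√(t + lambda))⁻¹) x) * cfc (fun t : ℝ => √(t + lambda)) x = z := by
  simp only [← mul_assoc, cfc_sqrt_add_const_mul_cfc_inv_sqrt_add_const hx hlam, one_mul]
  rw [mul_assoc, cfc_inv_sqrt_add_const_mul_cfc_sqrt_add_const hx hlam, mul_one]

lemma norm_cfc_inv_sqrt_add_const_mul_cfc_sqrt_add_const_sq_le (hx : 0 ≤ x) (hy : 0 ≤ y)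
    (hlam : 0 < lambda) :
    ‖cfc (fun t : ℝ => (√(t + lambda))⁻¹) x * cfc (fun t : ℝ => √(t + lambda)) y‖ ^ 2
      ≤ 1 + ‖cfc (fun t : ℝ => (√(t + lambda))⁻¹) x * (x - y)
          * cfc (fun t : ℝ => (√(t + lambda))⁻¹) x‖ := by
  set R := cfc (fun t : ℝ => (√(t + lambda))⁻¹) x
  set S := cfc (fun t : ℝ => √(t + lambda)) y
  have hR : IsSelfAdjoint R := cfc_predicate _ x
  have hS : IsSelfAdjoint S := cfc_predicate _ y
  have key : R * S * star (R * S) = 1 - R * (x - y) * R := calc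
    R * S * star (R * S) = R * (S * S) * R := by
      rw [star_mul, hR.star_eq, hS.star_eq]; noncomm_ring
    _ = R * (x + algebraMap ℝ 𝒜 lambda) * R - R * (x - y) * R := by
      rw [cfc_sqrt_add_const_mul_self hy hlam.le]; noncomm_ring
    _ = 1 - R * (x - y) * R := by rw [cfc_inv_sqrt_add_const_conj hx hlam]
  calc ‖R * S‖ ^ 2 = ‖1 - R * (x - y) * R‖ := by rw [sq, ← CStarRing.norm_self_mul_star, key]
    _ ≤ ‖(1 : 𝒜)‖ + ‖R * (x - y) * R‖ := norm_sub_le _ _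
    _ ≤ 1 + ‖R * (x - y) * R‖ := by grw [norm_one_le_one]

lemma norm_cfc_sqrt_add_const_mul_cfc_inv_sqrt_add_const_sq_le (hx : 0 ≤ x) (hy : 0 ≤ y)
    (hlam : 0 < lambda)
    (hxy : ‖cfc (fun t : ℝ => (√(t + lambda))⁻¹) x * (x - y)
      * cfc (fun t : ℝ => (√(t + lambda))⁻¹) x‖ < 1) :
    ‖cfc (fun t : ℝ => √(t + lambda)) x * cfc (fun t : ℝ => (√(t + lambda))⁻¹) y‖ ^ 2
      ≤ 1 / (1 - ‖cfc (fun t : ℝ => (√(t + lambda))⁻¹) x * (x - y)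
          * cfc (fun t : ℝ => (√(t + lambda))⁻¹) x‖) := by
  set d := cfc (fun t : ℝ => (√(t + lambda))⁻¹) x * (x - y)
      * cfc (fun t : ℝ => (√(t + lambda))⁻¹) x
  set S := cfc (fun t : ℝ => √(t + lambda)) x
  set R := cfc (fun t : ℝ => (√(t + lambda))⁻¹) y
  have hS : IsSelfAdjoint S := cfc_predicate _ x
  have hR : IsSelfAdjoint R := cfc_predicate _ y
  have hd : IsSelfAdjoint d := by
    have hRx : IsSelfAdjoint (cfc (fun t : ℝ => (√(t + lambda))⁻¹) x) := cfc_predicate _ x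
    simpa only [hRx.star_eq] using
      ((IsSelfAdjoint.of_nonneg hx).sub (.of_nonneg hy)).conjugate
        (cfc (fun t : ℝ => (√(t + lambda))⁻¹) x)
  have hc : 0 < 1 - ‖d‖ := sub_pos.mpr hxy
  have hxy_le : x - y ≤ ‖d‖ • (x + algebraMap ℝ 𝒜 lambda) := by
    have := star_left_conjugate_le_norm_smul (a := S) hd
    rwa [hS.star_eq, cfc_sqrt_add_const_conj_cfc_inv_sqrt_add_const_conj hx hlam,
      cfc_sqrt_add_const_mul_self hx hlam.le] at this
  have hsmul_le : (1 - ‖d‖) • (x + algebraMap ℝ 𝒜 lambda) ≤ y + algebraMap ℝ 𝒜 lambda := by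
    rw [← sub_nonneg] at hxy_le ⊢
    convert hxy_le using 1
    module
  have hstar_le : (1 - ‖d‖) • (star (S * R) * (S * R)) ≤ 1 := calc
    (1 - ‖d‖) • (star (S * R) * (S * R))
        = R * ((1 - ‖d‖) • (x + algebraMap ℝ 𝒜 lambda)) * R := by
      rw [← cfc_sqrt_add_const_mul_self hx hlam.le, mul_smul_comm, smul_mul_assoc, star_mul,
        hS.star_eq, hR.star_eq]
      noncomm_ring
    _ ≤ R * (y + algebraMap ℝ 𝒜 lambda) * R := hR.conjugate_le_conjugate hsmul_le
    _ = 1 := cfc_inv_sqrt_add_const_conj hy hlam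
  have hnorm := norm_le_norm_of_nonneg_of_le (smul_nonneg hc.le (star_mul_self_nonneg _)) hstar_le
  rw [norm_smul, Real.norm_of_nonneg hc.le, CStarRing.norm_star_mul_self, ← sq] at hnorm
  rw [le_div_iff₀ hc, mul_comm]
  exact hnorm.trans norm_one_le_one

end CStarAlgebra

open CStarAlgebra in
theorem stmt15_general {H : Type*} [NormedAddCommGroup H] [InnerProductSpace ℂ H] [CompleteSpace H]
    (A B : H →L[ℂ] H) (hA : A.IsPositive) (hB : B.IsPositive)
    (lambda : ℝ) (hlam : 0 < lambda) (a : ℝ) (ha : a ∈ Set.Ico (0:ℝ) 1)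
    (hbound : ‖cfc (fun t : ℝ => (Real.sqrt (t + lambda))⁻¹) A * (A - B) *
        cfc (fun t : ℝ => (Real.sqrt (t + lambda))⁻¹) A‖ ≤ a) :
    ‖cfc (fun t : ℝ => (Real.sqrt (t + lambda))⁻¹) A *
        cfc (fun t : ℝ => Real.sqrt (t + lambda)) B‖ ^ 2 ≤ 1 + a ∧
    ‖cfc (fun t : ℝ => Real.sqrt (t + lambda)) A *
        cfc (fun t : ℝ => (Real.sqrt (t + lambda))⁻¹) B‖ ^ 2 ≤ 1 / (1 - a) := by
  have hA' := (A.nonneg_iff_isPositive).mpr hA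
  have hB' := (B.nonneg_iff_isPositive).mpr hB
  refine ⟨?_, ?_⟩
  · grw [norm_cfc_inv_sqrt_add_const_mul_cfc_sqrt_add_const_sq_le hA' hB' hlam, hbound]
  · grw [norm_cfc_sqrt_add_const_mul_cfc_inv_sqrt_add_const_sq_le hA' hB' hlam
      (hbound.trans_lt ha.2), hbound]
    linarith [ha.2]

/-- if `‖(A+λ)^{-1/2}(A-B)(A+λ)^{-1/2}‖ ≤ a < 1` for positive operators
`A, B` and `λ > 0` (square roots taken via the continuous functional calculus), then
`‖(A+λ)^{-1/2}(B+λ)^{1/2}‖² ≤ 1 + a` and `‖(A+λ)^{1/2}(B+λ)^{-1/2}‖² ≤ 1/(1-a)`. -/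
theorem stmt15 {H : Type*} [NormedAddCommGroup H] [InnerProductSpace ℂ H] [CompleteSpace H]
    [TopologicalSpace.SeparableSpace H]
    (A B : H →L[ℂ] H) (hA : A.IsPositive) (hB : B.IsPositive)
    (lambda : ℝ) (hlam : 0 < lambda) (a : ℝ) (ha : a ∈ Set.Ico (0:ℝ) 1)
    (hbound : ‖cfc (fun t : ℝ => (Real.sqrt (t + lambda))⁻¹) A * (A - B) *
        cfc (fun t : ℝ => (Real.sqrt (t + lambda))⁻¹) A‖ ≤ a) :
    ‖cfc (fun t : ℝ => (Real.sqrt (t + lambda))⁻¹) A *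
        cfc (fun t : ℝ => Real.sqrt (t + lambda)) B‖ ^ 2 ≤ 1 + a ∧
    ‖cfc (fun t : ℝ => Real.sqrt (t + lambda)) A *
        cfc (fun t : ℝ => (Real.sqrt (t + lambda))⁻¹) B‖ ^ 2 ≤ 1 / (1 - a) :=
  stmt15_general A B hA hB lambda hlam a ha hbound
end
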